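/- arXiv:1304.5564 — 6 statements merged into one kernel-verified Lean document; each statement's English description precedes it below -/
import Mathlib

section
/- For every a > 0 and all complex numbers u, v, one has | |u|^a u - |v|^a v | ≤ (a+1)(|u|+|v|)^a |u-v|. -/
lemma aux_rpow_sub_mul (a x y : ℝ) (ha : 0 < a) (hy : 0 ≤ y) (hyx : y ≤ x) :
    (x ^ a - y ^ a) * y ≤ a * (x + y) ^ a * (x - y) := by
  rcases eq_or_lt_of_le hyx with he | he
  · subst he; simp
  rcases eq_or_lt_of_le hy with h0 | h0
  · rw [← h0]
    have hx : 0 < x := h0 ▸ he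
    simp only [mul_zero, add_zero, sub_zero]
    exact mul_nonneg (mul_nonneg ha.le (Real.rpow_nonneg hx.le _)) hx.le
  have hx : 0 < x := h0.trans he
  obtain ⟨c, hc, hceq⟩ := exists_hasDerivAt_eq_slope (fun t => t ^ a)
      (fun t => a * t ^ (a - 1)) he
      (by
        apply ContinuousOn.rpow_const continuousOn_id
        intro t ht
        exact Or.inl (ne_of_gt (lt_of_lt_of_le h0 ht.1)))
      (fun t ht => Real.hasDerivAt_rpow_const (Or.inl (ne_of_gt (h0.trans ht.1))))
  have hcpos : 0 < c := h0.trans hc.1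
  rw [eq_div_iff (sub_ne_zero.mpr he.ne')] at hceq
  have key : x ^ a - y ^ a = a * c ^ (a - 1) * (x - y) := hceq.symm
  have hca : c ^ (a - 1) * c = c ^ a := by
    rw [← Real.rpow_add_one (ne_of_gt hcpos)]
    norm_num
  have hcnn : (0:ℝ) ≤ c ^ (a - 1) := Real.rpow_nonneg hcpos.le _
  calc (x ^ a - y ^ a) * y = a * (c ^ (a - 1) * y) * (x - y) := by rw [key]; ring
    _ ≤ a * (c ^ (a - 1) * c) * (x - y) := by
        apply mul_le_mul_of_nonneg_right _ (by linarith)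
        exact mul_le_mul_of_nonneg_left (mul_le_mul_of_nonneg_left hc.1.le hcnn) ha.le
    _ = a * c ^ a * (x - y) := by rw [hca]
    _ ≤ a * (x + y) ^ a * (x - y) := by
        apply mul_le_mul_of_nonneg_right _ (by linarith)
        exact mul_le_mul_of_nonneg_left
          (Real.rpow_le_rpow hcpos.le (by linarith [hc.2]) ha.le) ha.le

/-- For every `a > 0` and all complex numbers `u, v`:
`| |u|^a u - |v|^a v | ≤ (a+1) (|u|+|v|)^a |u-v|`. -/
theorem abs_rpow_mul_sub_abs_rpow_mul_le (a : ℝ) (ha : 0 < a) (u v : ℂ) :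
    ‖(‖u‖ ^ a : ℝ) • u - (‖v‖ ^ a : ℝ) • v‖ ≤
      (a + 1) * (‖u‖ + ‖v‖) ^ a * ‖u - v‖ := by
  wlog hle : ‖v‖ ≤ ‖u‖ generalizing u v
  · have h := this v u (le_of_not_ge hle)
    have h1 : ‖v - u‖ = ‖u - v‖ := norm_sub_rev v u
    have h2 : ‖(‖v‖ ^ a : ℝ) • v - (‖u‖ ^ a : ℝ) • u‖
        = ‖(‖u‖ ^ a : ℝ) • u - (‖v‖ ^ a : ℝ) • v‖ := norm_sub_rev _ _
    rw [h1, h2, add_comm ‖v‖ ‖u‖] at h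
    exact h
  set x := ‖u‖
  set y := ‖v‖
  have hy : (0:ℝ) ≤ y := norm_nonneg v
  have hx : (0:ℝ) ≤ x := norm_nonneg u
  have hsplit : (x ^ a : ℝ) • u - (y ^ a : ℝ) • v
      = (x ^ a : ℝ) • (u - v) + ((x ^ a - y ^ a : ℝ)) • v := by
    rw [smul_sub, sub_smul]; abel
  rw [hsplit]
  have hnn : (0:ℝ) ≤ a * (x + y) ^ a :=
    mul_nonneg ha.le (Real.rpow_nonneg (by linarith) a)
  calc ‖(x ^ a : ℝ) • (u - v) + ((x ^ a - y ^ a : ℝ)) • v‖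
      ≤ ‖(x ^ a : ℝ) • (u - v)‖ + ‖((x ^ a - y ^ a : ℝ)) • v‖ := norm_add_le _ _
    _ = x ^ a * ‖u - v‖ + |x ^ a - y ^ a| * y := by
        rw [norm_smul, norm_smul, Real.norm_eq_abs, Real.norm_eq_abs,
          abs_of_nonneg (Real.rpow_nonneg hx a)]
    _ = x ^ a * ‖u - v‖ + (x ^ a - y ^ a) * y := by
        rw [abs_of_nonneg (sub_nonneg.mpr (Real.rpow_le_rpow hy hle ha.le))]
    _ ≤ (x + y) ^ a * ‖u - v‖ + a * (x + y) ^ a * (x - y) := by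
        apply add_le_add
        · exact mul_le_mul_of_nonneg_right
            (Real.rpow_le_rpow hx (by linarith) ha.le) (norm_nonneg _)
        · exact aux_rpow_sub_mul a x y ha hy hle
    _ ≤ (x + y) ^ a * ‖u - v‖ + a * (x + y) ^ a * ‖u - v‖ := by
        exact add_le_add_right
          (mul_le_mul_of_nonneg_left (norm_sub_norm_le u v) hnn) _
    _ = (a + 1) * (x + y) ^ a * ‖u - v‖ := by ring
end

section
/- For every a > 0 there exists a constant C(a) such that for all complex numbers u, v: | |u|^a u - |v|^a v | ≤ C(a) · | |u|^{a+1} u - |v|^{a+1} v |^{(a+1)/(a+2)}. In fact one may take C(a) = 2^{(a+3)/(a+2)}. -/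
open Real

private lemma my_rpow_add_le {x y θ : ℝ} (hx : 0 ≤ x) (hy : 0 ≤ y) (hθ0 : 0 ≤ θ)
    (hθ1 : θ ≤ 1) : (x + y) ^ θ ≤ x ^ θ + y ^ θ := by
  have h := NNReal.rpow_add_le_add_rpow (x.toNNReal) (y.toNNReal) hθ0 hθ1
  rw [← Real.toNNReal_add hx hy] at h
  have h2 := NNReal.coe_le_coe.2 h
  rwa [NNReal.coe_add, NNReal.coe_rpow, NNReal.coe_rpow, NNReal.coe_rpow,
    Real.coe_toNNReal _ (by linarith), Real.coe_toNNReal _ hx, Real.coe_toNNReal _ hy] at h2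

private lemma my_rpow_sub_le {r s θ : ℝ} (hs : 0 ≤ s) (hsr : s ≤ r) (hθ0 : 0 ≤ θ)
    (hθ1 : θ ≤ 1) : r ^ θ - s ^ θ ≤ (r - s) ^ θ := by
  have h : r ^ θ ≤ (r - s) ^ θ + s ^ θ := by
    have := my_rpow_add_le (x := r - s) (y := s) (by linarith) hs hθ0 hθ1
    simpa using this
  linarith

private lemma abs_rpow_sub_rpow_le {r s θ : ℝ} (hr : 0 ≤ r) (hs : 0 ≤ s) (hθ0 : 0 ≤ θ)
    (hθ1 : θ ≤ 1) : |r ^ θ - s ^ θ| ≤ |r - s| ^ θ := by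
  rcases le_total s r with h | h
  · rw [abs_of_nonneg (by linarith : (0:ℝ) ≤ r - s)]
    rw [abs_of_nonneg (sub_nonneg.2 (Real.rpow_le_rpow hs h hθ0))]
    exact my_rpow_sub_le hs h hθ0 hθ1
  · rw [abs_of_nonpos (by linarith : r - s ≤ 0),
      abs_of_nonpos (sub_nonpos.2 (Real.rpow_le_rpow hr h hθ0))]
    rw [neg_sub, neg_sub]
    linarith [my_rpow_sub_le hr h hθ0 hθ1]

private lemma sq_rpow (x θ : ℝ) (hx : 0 ≤ x) : (x ^ θ) ^ 2 = (x ^ 2) ^ θ := by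
  rw [← Real.rpow_natCast (x ^ θ) 2, ← Real.rpow_natCast x 2,
    ← Real.rpow_mul hx, ← Real.rpow_mul hx]
  congr 1
  push_cast
  ring

private lemma norm_sq_expand (w₁ w₂ : ℂ) (c₁ c₂ : ℝ) :
    ‖c₁ • w₁ - c₂ • w₂‖ ^ 2 =
      c₁ ^ 2 * ‖w₁‖ ^ 2 + c₂ ^ 2 * ‖w₂‖ ^ 2
        - 2 * c₁ * c₂ * (w₁.re * w₂.re + w₁.im * w₂.im) := by
  have h : ∀ z : ℂ, ‖z‖ ^ 2 = z.re ^ 2 + z.im ^ 2 := by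
    intro z
    rw [Complex.sq_norm, Complex.normSq_apply]
    ring
  rw [h, h, h]
  simp only [Complex.sub_re, Complex.sub_im, Complex.real_smul, Complex.mul_re,
    Complex.mul_im, Complex.ofReal_re, Complex.ofReal_im]
  ring

set_option maxHeartbeats 1000000 in
private lemma key_holder (θ : ℝ) (hθ0 : 0 < θ) (hθ1 : θ < 1) (w₁ w₂ : ℂ) :
    ‖(‖w₁‖ ^ (θ - 1) : ℝ) • w₁ - (‖w₂‖ ^ (θ - 1) : ℝ) • w₂‖ ≤
      2 ^ (2 - θ) * ‖w₁ - w₂‖ ^ θ := by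
  have hnormG : ∀ w : ℂ, ‖(‖w‖ ^ (θ - 1) : ℝ) • w‖ = ‖w‖ ^ θ := by
    intro w
    rcases eq_or_ne w 0 with h | h
    · simp [h, Real.zero_rpow (ne_of_gt hθ0)]
    · have hw : (0:ℝ) < ‖w‖ := norm_pos_iff.2 h
      rw [norm_smul, Real.norm_eq_abs, abs_of_nonneg (Real.rpow_nonneg (norm_nonneg w) _)]
      nth_rewrite 2 [← Real.rpow_one ‖w‖]
      rw [← Real.rpow_add hw]
      norm_num
  have hone : (1:ℝ) ≤ 2 ^ (2 - θ) :=
    Real.one_le_rpow (by norm_num) (by linarith)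
  rcases eq_or_ne w₁ 0 with h1 | h1
  · subst h1
    rw [smul_zero, zero_sub, norm_neg, hnormG, zero_sub, norm_neg]
    nlinarith [Real.rpow_nonneg (norm_nonneg w₂) θ]
  rcases eq_or_ne w₂ 0 with h2 | h2
  · subst h2
    rw [smul_zero, sub_zero, hnormG, sub_zero]
    nlinarith [Real.rpow_nonneg (norm_nonneg w₁) θ]
  -- main case
  have hr : (0:ℝ) < ‖w₁‖ := norm_pos_iff.2 h1
  have hs : (0:ℝ) < ‖w₂‖ := norm_pos_iff.2 h2
  set r := ‖w₁‖ with hrdef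
  set s := ‖w₂‖ with hsdef
  set P := w₁.re * w₂.re + w₁.im * w₂.im with hPdef
  have hr2 : r ^ 2 = w₁.re ^ 2 + w₁.im ^ 2 := by
    rw [hrdef, Complex.sq_norm, Complex.normSq_apply]; ring
  have hs2 : s ^ 2 = w₂.re ^ 2 + w₂.im ^ 2 := by
    rw [hsdef, Complex.sq_norm, Complex.normSq_apply]; ring
  have hCS : P ^ 2 ≤ (r * s) ^ 2 := by
    rw [hPdef]
    nlinarith [sq_nonneg (w₁.re * w₂.im - w₂.re * w₁.im), hr2, hs2]
  have hPle : P ≤ r * s := by nlinarith [mul_pos hr hs]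
  have hPge : -(r * s) ≤ P := by nlinarith [mul_pos hr hs]
  set A := r * s - P with hAdef
  have hA0 : 0 ≤ A := by linarith
  have hA2 : A ≤ 2 * (r * s) := by linarith
  have hD : ‖w₁ - w₂‖ ^ 2 = (r - s) ^ 2 + 2 * A := by
    have h := norm_sq_expand w₁ w₂ 1 1
    simp only [one_smul, one_pow, one_mul] at h
    rw [h, ← hrdef, ← hsdef, ← hPdef, hAdef]; ring
  set c₁ := r ^ (θ - 1) with hc1
  set c₂ := s ^ (θ - 1) with hc2
  have hexp : ‖c₁ • w₁ - c₂ • w₂‖ ^ 2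
      = (r ^ θ - s ^ θ) ^ 2 + c₁ * c₂ * (2 * A) := by
    rw [norm_sq_expand]
    have e1 : c₁ ^ 2 * r ^ 2 = (r ^ θ) ^ 2 := by
      rw [hc1, ← Real.rpow_natCast (r ^ (θ - 1)) 2, ← Real.rpow_natCast r 2,
        ← Real.rpow_natCast (r ^ θ) 2, ← Real.rpow_mul hr.le, ← Real.rpow_mul hr.le,
        ← Real.rpow_add hr]
      congr 1
      push_cast
      ring
    have e2 : c₂ ^ 2 * s ^ 2 = (s ^ θ) ^ 2 := by
      rw [hc2, ← Real.rpow_natCast (s ^ (θ - 1)) 2, ← Real.rpow_natCast s 2,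
        ← Real.rpow_natCast (s ^ θ) 2, ← Real.rpow_mul hs.le, ← Real.rpow_mul hs.le,
        ← Real.rpow_add hs]
      congr 1
      push_cast
      ring
    have e3 : c₁ * c₂ * (r * s) = r ^ θ * s ^ θ := by
      rw [hc1, hc2, Real.rpow_sub_one hr.ne', Real.rpow_sub_one hs.ne']
      field_simp
    rw [← hrdef, ← hsdef, ← hPdef, e1, e2]
    linear_combination (-2 : ℝ) * e3 - 2 * c₁ * c₂ * hAdef
  -- bound the two terms
  have hterm1 : (r ^ θ - s ^ θ) ^ 2 ≤ ((r - s) ^ 2) ^ θ := by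
    have h := abs_rpow_sub_rpow_le hr.le hs.le hθ0.le hθ1.le
    calc (r ^ θ - s ^ θ) ^ 2 = |r ^ θ - s ^ θ| ^ 2 := (sq_abs _).symm
      _ ≤ (|r - s| ^ θ) ^ 2 := pow_le_pow_left₀ (abs_nonneg _) h 2
      _ = ((r - s) ^ 2) ^ θ := by rw [sq_rpow _ _ (abs_nonneg _), sq_abs]
  have hterm2 : c₁ * c₂ * (2 * A) ≤ 2 ^ (2 - 2*θ) * (2 * A) ^ θ := by
    rcases eq_or_lt_of_le hA0 with h | hApos
    · rw [← h]
      simp [Real.zero_rpow (ne_of_gt hθ0)]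
    · have hrs : (0:ℝ) < r * s := mul_pos hr hs
      have hB : (0:ℝ) < 2 * A := by linarith
      have hsplit : (2*A) = (2*A) ^ (1-θ) * (2*A) ^ θ := by
        rw [← Real.rpow_add hB, show 1 - θ + θ = 1 by ring, Real.rpow_one]
      have key : c₁ * c₂ * (2 * A) = (r*s) ^ (θ-1) * (2*A) ^ (1-θ) * (2*A) ^ θ := by
        rw [hc1, hc2, ← Real.mul_rpow hr.le hs.le]
        nth_rewrite 1 [hsplit]
        ring
      rw [key]
      have hle : (2*A) ^ (1-θ) ≤ (4*(r*s)) ^ (1-θ) :=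
        Real.rpow_le_rpow hB.le (by linarith) (by linarith)
      have h4 : (4*(r*s)) ^ (1-θ) = 4 ^ (1-θ) * (r*s) ^ (1-θ) :=
        Real.mul_rpow (by norm_num) hrs.le
      have hcomb : (r*s) ^ (θ-1) * (4*(r*s)) ^ (1-θ) = 4 ^ (1-θ) := by
        rw [h4, show (r*s) ^ (θ-1) * (4 ^ (1-θ) * (r*s) ^ (1-θ))
            = 4 ^ (1-θ) * ((r*s) ^ (θ-1) * (r*s) ^ (1-θ)) by ring,
          ← Real.rpow_add hrs, show θ - 1 + (1 - θ) = 0 by ring, Real.rpow_zero, mul_one]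
      have h22 : (2:ℝ) ^ (2:ℝ) = 4 := by
        rw [Real.rpow_two]; norm_num
      have h42 : (4:ℝ) ^ (1-θ) = 2 ^ (2 - 2*θ) := by
        rw [← h22, ← Real.rpow_mul (by norm_num : (0:ℝ) ≤ 2)]
        congr 1; ring
      calc (r*s) ^ (θ-1) * (2*A) ^ (1-θ) * (2*A) ^ θ
          ≤ (r*s) ^ (θ-1) * (4*(r*s)) ^ (1-θ) * (2*A) ^ θ := by
            apply mul_le_mul_of_nonneg_right _ (Real.rpow_nonneg hB.le θ)
            exact mul_le_mul_of_nonneg_left hle (Real.rpow_nonneg hrs.le _)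
        _ = 2 ^ (2 - 2*θ) * (2*A) ^ θ := by rw [hcomb, h42]
  -- combine
  have hDnn : (0:ℝ) ≤ (r - s) ^ 2 + 2 * A := by positivity
  have h2θ : (0:ℝ) ≤ 2 ^ (2 - 2*θ) := Real.rpow_nonneg (by norm_num) _
  have hub : ‖c₁ • w₁ - c₂ • w₂‖ ^ 2 ≤ (1 + 2 ^ (2 - 2*θ)) * ((r-s)^2 + 2*A) ^ θ := by
    rw [hexp]
    have hm1 : ((r - s) ^ 2) ^ θ ≤ ((r-s)^2 + 2*A) ^ θ :=
      Real.rpow_le_rpow (sq_nonneg _) (by linarith) hθ0.le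
    have hm2 : (2*A) ^ θ ≤ ((r-s)^2 + 2*A) ^ θ :=
      Real.rpow_le_rpow (by linarith) (by nlinarith [sq_nonneg (r-s)]) hθ0.le
    have hm2' := mul_le_mul_of_nonneg_left hm2 h2θ
    linarith [hterm1, hterm2]
  have hconst : (1:ℝ) + 2 ^ (2 - 2*θ) ≤ 2 ^ (4 - 2*θ) := by
    have e : (2:ℝ) ^ (4 - 2*θ) = 2 ^ (2 - 2*θ) * 2 ^ (2:ℝ) := by
      rw [← Real.rpow_add (by norm_num : (0:ℝ) < 2)]
      congr 1; ring
    have h1 : (1:ℝ) ≤ 2 ^ (2 - 2*θ) :=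
      Real.one_le_rpow (by norm_num) (by linarith)
    have h22 : (2:ℝ) ^ (2:ℝ) = 4 := by rw [Real.rpow_two]; norm_num
    nlinarith
  have hfinal2 : ‖c₁ • w₁ - c₂ • w₂‖ ^ 2 ≤ (2 ^ (2-θ) * ‖w₁ - w₂‖ ^ θ) ^ 2 := by
    have hx : ((r-s)^2 + 2*A) ^ θ = (‖w₁ - w₂‖ ^ θ) ^ 2 := by
      rw [sq_rpow _ _ (norm_nonneg _), hD]
    have hy : (2:ℝ) ^ (4 - 2*θ) = ((2:ℝ) ^ (2-θ)) ^ 2 := by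
      rw [← Real.rpow_natCast ((2:ℝ) ^ (2-θ)) 2, ← Real.rpow_mul (by norm_num : (0:ℝ) ≤ 2)]
      congr 1; push_cast; ring
    have hθnn : (0:ℝ) ≤ ((r-s)^2 + 2*A) ^ θ := Real.rpow_nonneg hDnn θ
    calc ‖c₁ • w₁ - c₂ • w₂‖ ^ 2 ≤ (1 + 2 ^ (2 - 2*θ)) * ((r-s)^2 + 2*A) ^ θ := hub
      _ ≤ 2 ^ (4 - 2*θ) * ((r-s)^2 + 2*A) ^ θ := mul_le_mul_of_nonneg_right hconst hθnn
      _ = ((2:ℝ) ^ (2-θ)) ^ 2 * (‖w₁ - w₂‖ ^ θ) ^ 2 := by rw [hx, hy]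
      _ = (2 ^ (2-θ) * ‖w₁ - w₂‖ ^ θ) ^ 2 := by ring
  have hrhs : (0:ℝ) ≤ 2 ^ (2-θ) * ‖w₁ - w₂‖ ^ θ := by positivity
  exact (pow_le_pow_iff_left₀ (norm_nonneg _) hrhs two_ne_zero).1 hfinal2

/-- For every `a > 0` there is a constant `C(a)` (one may take `C(a) = 2^((a+3)/(a+2))`)
such that for all complex `u, v`:
`| |u|^a u - |v|^a v | ≤ C(a) | |u|^{a+1} u - |v|^{a+1} v |^{(a+1)/(a+2)}`. -/
theorem abs_rpow_mul_sub_le_rpow (a : ℝ) (ha : 0 < a) (u v : ℂ) :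
    ‖(‖u‖ ^ a : ℝ) • u - (‖v‖ ^ a : ℝ) • v‖ ≤
      2 ^ ((a + 3) / (a + 2)) *
        ‖(‖u‖ ^ (a + 1) : ℝ) • u - (‖v‖ ^ (a + 1) : ℝ) • v‖ ^ ((a + 1) / (a + 2)) := by
  set θ := (a + 1) / (a + 2) with hθdef
  have ha2 : (0:ℝ) < a + 2 := by linarith
  have hθ0 : 0 < θ := by positivity
  have hθ1 : θ < 1 := by rw [hθdef, div_lt_one ha2]; linarith
  have hG : ∀ w : ℂ, (‖(‖w‖ ^ (a+1) : ℝ) • w‖ ^ (θ - 1) : ℝ) • ((‖w‖ ^ (a+1) : ℝ) • w)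
      = (‖w‖ ^ a : ℝ) • w := by
    intro w
    rcases eq_or_ne w 0 with h | h
    · simp [h]
    · have hw : (0:ℝ) < ‖w‖ := norm_pos_iff.2 h
      have hnw : ‖(‖w‖ ^ (a+1) : ℝ) • w‖ = ‖w‖ ^ (a + 2) := by
        rw [norm_smul, Real.norm_eq_abs, abs_of_nonneg (Real.rpow_nonneg (norm_nonneg w) _)]
        nth_rewrite 2 [← Real.rpow_one ‖w‖]
        rw [← Real.rpow_add hw]
        congr 1; ring
      rw [hnw, ← Real.rpow_mul (norm_nonneg w), smul_smul, ← Real.rpow_add hw]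
      congr 2
      rw [hθdef]
      field_simp
      ring
  have hkey := key_holder θ hθ0 hθ1 ((‖u‖ ^ (a+1) : ℝ) • u) ((‖v‖ ^ (a+1) : ℝ) • v)
  rw [hG u, hG v] at hkey
  have hc : (2:ℝ) ^ (2 - θ) = 2 ^ ((a + 3) / (a + 2)) := by
    congr 1
    rw [hθdef]
    field_simp
    ring
  rwa [hc] at hkey
end

section
/- Let a > 0 and let z be a complex number with |z| ≤ 1. Then |1 - |z|^{-1/(a+2)} z| ≤ 2 |1 - z|, where |z|^{-1/(a+2)} z is interpreted as 0 when z = 0. -/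
/-- Let `a > 0` and `z ∈ ℂ` with `|z| ≤ 1`. Then `|1 - |z|^{-1/(a+2)} z| ≤ 2 |1 - z|`.
(Note `‖z‖ ^ (-(1/(a+2))) = 0` when `z = 0` by the convention `0 ^ x = 0` for `x ≠ 0`,
so the expression is interpreted as `0` at `z = 0`, as required.) -/
theorem one_sub_rescaled_le_two_mul (a : ℝ) (ha : 0 < a) (z : ℂ) (hz : ‖z‖ ≤ 1) :
    ‖1 - (‖z‖ ^ (-(1 / (a + 2))) : ℝ) • z‖ ≤ 2 * ‖1 - z‖ := by
  rcases eq_or_ne z 0 with rfl | hz0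
  · simp only [norm_zero, smul_zero, sub_zero, norm_one]
    norm_num
  set t : ℝ := ‖z‖ with ht
  have ht0 : 0 < t := norm_pos_iff.mpr hz0
  set r : ℝ := t ^ (-(1 / (a + 2))) with hr
  have hr1 : 1 ≤ r := by
    apply Real.one_le_rpow_of_pos_of_le_one_of_nonpos ht0 hz
    have : 0 ≤ 1 / (a + 2) := by positivity
    linarith
  have key : (r - 1) * t ≤ 1 - t := by
    have : r * t = t ^ (1 - 1 / (a + 2)) := by
      rw [hr, Real.rpow_neg ht0.le, Real.rpow_sub ht0, Real.rpow_one]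
      ring
    have hle : r * t ≤ 1 := by
      rw [this]
      apply Real.rpow_le_one ht0.le hz
      rw [sub_nonneg, div_le_one (by linarith)]
      linarith
    linarith
  have h1 : ‖1 - (r : ℝ) • z‖ ≤ ‖1 - z‖ + (r - 1) * t := by
    calc ‖1 - (r : ℝ) • z‖ = ‖(1 - z) + (1 - r) • z‖ := by
          congr 1; rw [sub_smul, one_smul]; ring
      _ ≤ ‖1 - z‖ + ‖(1 - r) • z‖ := norm_add_le _ _
      _ = ‖1 - z‖ + |1 - r| * t := by rw [norm_smul, Real.norm_eq_abs, ht]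
      _ = ‖1 - z‖ + (r - 1) * t := by rw [abs_of_nonpos (by linarith)]; ring_nf
  have h2 : 1 - t ≤ ‖1 - z‖ := by
    have := norm_sub_norm_le (1 : ℂ) z
    simpa [ht] using this
  linarith
end

section
/- Let a > 0 and let z be a complex number with |z| ≤ 1. Then |1 - |z|^{-1/(a+2)} z| ≤ 2^{(a+3)/(a+2)} |1 - z|^{(a+1)/(a+2)}, where |z|^{-1/(a+2)} z is interpreted as 0 when z = 0. -/
/-- Let `a > 0` and `z ∈ ℂ` with `|z| ≤ 1`. Then
`|1 - |z|^{-1/(a+2)} z| ≤ 2^{(a+3)/(a+2)} |1 - z|^{(a+1)/(a+2)}`.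
(Note `‖z‖ ^ (-(1/(a+2))) = 0` when `z = 0` by the convention `0 ^ x = 0` for `x ≠ 0`.) -/
theorem one_sub_rescaled_le_rpow (a : ℝ) (ha : 0 < a) (z : ℂ) (hz : ‖z‖ ≤ 1) :
    ‖1 - (‖z‖ ^ (-(1 / (a + 2))) : ℝ) • z‖ ≤
      2 ^ ((a + 3) / (a + 2)) * ‖1 - z‖ ^ ((a + 1) / (a + 2)) := by
  have ha2 : (0:ℝ) < a + 2 := by linarith
  set r := ‖z‖ with hr
  have hr0 : 0 ≤ r := norm_nonneg z
  set β : ℝ := (a + 1) / (a + 2) with hβ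
  have hβ0 : 0 < β := by positivity
  have hβ1 : β < 1 := by rw [hβ, div_lt_one ha2]; linarith
  set s : ℝ := r ^ (-(1 / (a + 2))) with hs
  set w : ℂ := s • z with hw
  have hs0 : 0 ≤ s := Real.rpow_nonneg hr0 _
  have hw_norm : ‖w‖ = r ^ β := by
    have hsr : ‖w‖ = s * r := by
      rw [hw, norm_smul, Real.norm_eq_abs, abs_of_nonneg hs0]
    rw [hsr, hs]
    rcases eq_or_lt_of_le hr0 with h0 | hpos
    · have hr' : r = 0 := h0.symm
      rw [hr', Real.zero_rpow (neg_ne_zero.mpr (by positivity)),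
        Real.zero_rpow (ne_of_gt hβ0), zero_mul]
    · rw [← Real.rpow_add_one hpos.ne']
      congr 1
      rw [hβ]
      field_simp
      ring
  have hwr_le : r ^ β ≤ 1 := Real.rpow_le_one hr0 hz hβ0.le
  have h1z : 1 - r ≤ ‖1 - z‖ := by
    have := norm_sub_norm_le (1 : ℂ) z
    simpa [hr] using this
  have hzw : ‖z - w‖ ≤ ‖1 - z‖ := by
    rcases eq_or_lt_of_le hr0 with h0 | hpos
    · have hz0 : z = 0 := norm_eq_zero.mp h0.symm
      have hzw0 : z - w = 0 := by rw [hw, hz0, smul_zero, sub_zero]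
      rw [hzw0, norm_zero]
      exact norm_nonneg _
    · have hs1 : 1 ≤ s := by
        rw [hs]
        exact Real.one_le_rpow_of_pos_of_le_one_of_nonpos hpos hz
          (neg_nonpos.mpr (by positivity))
      have : ‖z - w‖ = (s - 1) * r := by
        have : z - w = (1 - s : ℝ) • z := by
          rw [hw, sub_smul, one_smul]
        rw [this, norm_smul, Real.norm_eq_abs, abs_of_nonpos (by linarith)]
        ring
      rw [this]
      have hsr : s * r = r ^ β := by
        have := hw_norm
        rw [hw, norm_smul, Real.norm_eq_abs, abs_of_nonneg hs0] at this
        exact this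
      have : (s - 1) * r = r ^ β - r := by rw [sub_mul, one_mul, hsr]
      rw [this]
      have : r ^ β - r ≤ 1 - r := by linarith
      linarith
  have h1w2z : ‖1 - w‖ ≤ 2 * ‖1 - z‖ := by
    calc ‖1 - w‖ = ‖(1 - z) + (z - w)‖ := by ring_nf
      _ ≤ ‖1 - z‖ + ‖z - w‖ := norm_add_le _ _
      _ ≤ 2 * ‖1 - z‖ := by linarith
  have h1w2 : ‖1 - w‖ ≤ 2 := by
    calc ‖1 - w‖ ≤ ‖(1:ℂ)‖ + ‖w‖ := norm_sub_le _ _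
      _ = 1 + r ^ β := by rw [norm_one, hw_norm]
      _ ≤ 2 := by linarith
  have hn0 : (0:ℝ) ≤ ‖1 - w‖ := norm_nonneg _
  have key : ‖1 - w‖ ≤ 2 * ‖1 - z‖ ^ β := by
    calc ‖1 - w‖ = ‖1 - w‖ ^ ((1 - β) + β) := by
          rw [sub_add_cancel, Real.rpow_one]
      _ = ‖1 - w‖ ^ (1 - β) * ‖1 - w‖ ^ β :=
          Real.rpow_add' hn0 (by norm_num)
      _ ≤ 2 ^ (1 - β) * (2 * ‖1 - z‖) ^ β := by
          apply mul_le_mul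
          · exact Real.rpow_le_rpow hn0 h1w2 (by linarith)
          · exact Real.rpow_le_rpow hn0 h1w2z hβ0.le
          · positivity
          · positivity
      _ = 2 ^ (1 - β) * (2 ^ β * ‖1 - z‖ ^ β) := by
          rw [Real.mul_rpow (by norm_num) (norm_nonneg _)]
      _ = 2 * ‖1 - z‖ ^ β := by
          rw [← mul_assoc, ← Real.rpow_add (by norm_num : (0:ℝ) < 2)]
          norm_num
  calc ‖1 - w‖ ≤ 2 * ‖1 - z‖ ^ β := key
    _ ≤ 2 ^ ((a + 3) / (a + 2)) * ‖1 - z‖ ^ β := by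
        apply mul_le_mul_of_nonneg_right _ (by positivity)
        calc (2:ℝ) = 2 ^ (1:ℝ) := (Real.rpow_one 2).symm
          _ ≤ 2 ^ ((a + 3) / (a + 2)) :=
            Real.rpow_le_rpow_of_exponent_le one_le_two
              (by rw [le_div_iff₀ ha2]; linarith)
end

section
/- Let a ≥ 1. Then there exists a constant C(a) such that for all complex numbers u, v: | |u|^a - |v|^a | + | |u|^{a-2} u^2 - |v|^{a-2} v^2 | ≤ C(a)(|u|^{a-1} + |v|^{a-1}) |u - v|. -/
private lemma bern {r b : ℝ} (hr : 0 ≤ r) (hb : 1 ≤ b) : 1 - r ^ b ≤ b * (1 - r) := by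
  have h := one_add_mul_self_le_rpow_one_add (s := r - 1) (by linarith) hb
  rw [show 1 + (r - 1) = r by ring] at h
  linarith

private lemma oneSub {r b : ℝ} (hr0 : 0 < r) (hr1 : r ≤ 1) (hb0 : 0 ≤ b) :
    1 - r ^ b ≤ (b + 1) * (1 - r) := by
  rcases le_total 1 b with hb | hb
  · have := bern hr0.le hb; nlinarith
  · have h := Real.rpow_le_rpow_of_exponent_ge hr0 hr1 hb
    rw [Real.rpow_one] at h
    nlinarith

private lemma core {a r : ℝ} (ha : 1 ≤ a) (hr : 0 < r) (hr1 : r ≤ 1) :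
    |r ^ (2:ℝ) - r ^ a| ≤ (a + 1) * (1 - r) := by
  have hra : r ^ a ≤ r := by
    have h := Real.rpow_le_rpow_of_exponent_ge hr hr1 ha
    rwa [Real.rpow_one] at h
  have hr2 : (0:ℝ) ≤ r ^ (2:ℝ) := Real.rpow_nonneg hr.le _
  have hr2eq : r ^ (2:ℝ) = r * r := by
    rw [show (2:ℝ) = ((2:ℕ):ℝ) by norm_num, Real.rpow_natCast]; ring
  rcases le_total a 2 with h2 | h2
  · -- r^2 ≤ r^a, |..| = r^a - r^2 ≤ r - r^2 ≤ 1 - r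
    have h21 : r ^ (2:ℝ) ≤ r ^ a := Real.rpow_le_rpow_of_exponent_ge hr hr1 h2
    rw [abs_sub_comm, abs_of_nonneg (by linarith)]
    calc r ^ a - r ^ (2:ℝ) ≤ r - r ^ (2:ℝ) := by linarith
      _ = r * (1 - r) := by rw [hr2eq]; ring
      _ ≤ (a + 1) * (1 - r) := mul_le_mul_of_nonneg_right (by linarith) (by linarith)
  · have h21 : r ^ a ≤ r ^ (2:ℝ) := Real.rpow_le_rpow_of_exponent_ge hr hr1 h2
    rw [abs_of_nonneg (by linarith)]
    have hsplit : r ^ a = r ^ (2:ℝ) * r ^ (a - 2) := by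
      rw [← Real.rpow_add hr]; ring_nf
    have hos := oneSub hr hr1 (show (0:ℝ) ≤ a - 2 by linarith)
    have hr2le : r ^ (2:ℝ) ≤ 1 := Real.rpow_le_one hr.le hr1 (by norm_num)
    have hx1 : r ^ (a - 2) ≤ 1 := Real.rpow_le_one hr.le hr1 (by linarith)
    have h4 : r ^ (2:ℝ) * (1 - r ^ (a - 2)) ≤ 1 * (1 - r ^ (a - 2)) :=
      mul_le_mul_of_nonneg_right hr2le (by linarith)
    nlinarith

private lemma L1 {a s t : ℝ} (ha : 1 ≤ a) (hs : 0 ≤ s) (hst : s ≤ t) :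
    t ^ a - s ^ a ≤ a * t ^ (a - 1) * (t - s) := by
  rcases eq_or_lt_of_le (hs.trans hst) with ht | ht
  · have hs0 : s = 0 := le_antisymm (hst.trans_eq ht.symm) hs
    rw [← ht, hs0, Real.zero_rpow (by linarith)]
    simp
  · have h := bern (b := a) (div_nonneg hs ht.le) ha
    rw [Real.div_rpow hs ht.le] at h
    have hta : (0:ℝ) < t ^ a := Real.rpow_pos_of_pos ht a
    have h2 := mul_le_mul_of_nonneg_left h hta.le
    calc t ^ a - s ^ a = t ^ a * (1 - s ^ a / t ^ a) := by field_simp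
      _ ≤ t ^ a * (a * (1 - s / t)) := h2
      _ = a * (t ^ a / t) * (t - s) := by field_simp
      _ = a * t ^ (a - 1) * (t - s) := by rw [Real.rpow_sub_one ht.ne']
private lemma L2 {a s t : ℝ} (ha : 1 ≤ a) (hs : 0 < s) (hst : s ≤ t) :
    |t ^ (a - 2) - s ^ (a - 2)| * s ^ (2:ℝ) ≤ (a + 1) * t ^ (a - 1) * (t - s) := by
  have ht : 0 < t := hs.trans_le hst
  have hr : 0 < s / t := div_pos hs ht
  have hr1 : s / t ≤ 1 := (div_le_one ht).2 hst
  have h := core ha hr hr1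
  rw [Real.div_rpow hs.le ht.le, Real.div_rpow hs.le ht.le] at h
  have hta : (0:ℝ) < t ^ a := Real.rpow_pos_of_pos ht a
  have ht2 : (0:ℝ) < t ^ (2:ℝ) := Real.rpow_pos_of_pos ht 2
  have hs2 : (0:ℝ) ≤ s ^ (2:ℝ) := Real.rpow_nonneg hs.le _
  have e1 : t ^ (a - 2) = t ^ a / t ^ (2:ℝ) := Real.rpow_sub ht a 2
  have e2 : s ^ (a - 2) * s ^ (2:ℝ) = s ^ a := by rw [← Real.rpow_add hs]; ring_nf
  calc |t ^ (a - 2) - s ^ (a - 2)| * s ^ (2:ℝ)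
      = |(t ^ (a - 2) - s ^ (a - 2)) * s ^ (2:ℝ)| := by
        rw [abs_mul, abs_of_nonneg hs2]
    _ = |t ^ (a - 2) * s ^ (2:ℝ) - s ^ a| := by rw [sub_mul, e2]
    _ = |t ^ a * (s ^ (2:ℝ) / t ^ (2:ℝ) - s ^ a / t ^ a)| := by
        rw [e1]; congr 1; field_simp
    _ = t ^ a * |s ^ (2:ℝ) / t ^ (2:ℝ) - s ^ a / t ^ a| := by
        rw [abs_mul, abs_of_pos hta]
    _ ≤ t ^ a * ((a + 1) * (1 - s / t)) := mul_le_mul_of_nonneg_left h hta.le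
    _ = (a + 1) * (t ^ a / t) * (t - s) := by field_simp
    _ = (a + 1) * t ^ (a - 1) * (t - s) := by rw [Real.rpow_sub_one ht.ne']

private lemma main_aux {a : ℝ} (ha : 1 ≤ a) (u v : ℂ) (hvu : ‖v‖ ≤ ‖u‖) :
    |‖u‖ ^ a - ‖v‖ ^ a| + ‖(‖u‖ ^ (a - 2) : ℝ) • u ^ 2 - (‖v‖ ^ (a - 2) : ℝ) • v ^ 2‖ ≤
      (2 * a + 4) * (‖u‖ ^ (a - 1) + ‖v‖ ^ (a - 1)) * ‖u - v‖ := by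
  rcases eq_or_ne u 0 with hu | hu
  · have hv : v = 0 := by
      rw [hu, norm_zero] at hvu
      exact norm_le_zero_iff.mp hvu
    subst hu; subst hv
    simp
  · set t := ‖u‖ with htdef
    set s := ‖v‖ with hsdef
    set d := ‖u - v‖ with hddef
    have ht : 0 < t := norm_pos_iff.mpr hu
    have hs : 0 ≤ s := norm_nonneg v
    have hd : 0 ≤ d := norm_nonneg _
    have htsd : t - s ≤ d := by
      have := norm_sub_norm_le u v; linarith
    have hta1 : (0:ℝ) ≤ t ^ (a - 1) := Real.rpow_nonneg ht.le _
    have hsa1 : (0:ℝ) ≤ s ^ (a - 1) := Real.rpow_nonneg hs _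
    -- Term 1
    have hT1 : |t ^ a - s ^ a| ≤ a * t ^ (a - 1) * d := by
      rw [abs_of_nonneg (by linarith [Real.rpow_le_rpow hs hvu (by linarith : (0:ℝ) ≤ a)])]
      calc t ^ a - s ^ a ≤ a * t ^ (a - 1) * (t - s) := L1 ha hs hvu
        _ ≤ a * t ^ (a - 1) * d := by
            apply mul_le_mul_of_nonneg_left htsd
            positivity
    -- Term 2
    have hsplit : (t ^ (a - 2) : ℝ) • u ^ 2 - (s ^ (a - 2) : ℝ) • v ^ 2 =
        (t ^ (a - 2) : ℝ) • (u ^ 2 - v ^ 2) + ((t ^ (a - 2) - s ^ (a - 2) : ℝ)) • v ^ 2 := by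
      rw [smul_sub, sub_smul]; abel
    have hfac : ‖u ^ 2 - v ^ 2‖ = ‖u + v‖ * d := by
      rw [show u ^ 2 - v ^ 2 = (u + v) * (u - v) by ring, norm_mul]
    have hP1 : ‖(t ^ (a - 2) : ℝ) • (u ^ 2 - v ^ 2)‖ ≤ 2 * t ^ (a - 1) * d := by
      rw [norm_smul, Real.norm_eq_abs, abs_of_nonneg (Real.rpow_nonneg ht.le _), hfac]
      have huv : ‖u + v‖ ≤ 2 * t := by
        calc ‖u + v‖ ≤ ‖u‖ + ‖v‖ := norm_add_le u v
          _ ≤ 2 * t := by rw [← htdef, ← hsdef]; linarith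
      have e : t ^ (a - 2) * t = t ^ (a - 1) := by
        rw [← Real.rpow_add_one ht.ne']; ring_nf
      calc t ^ (a - 2) * (‖u + v‖ * d) ≤ t ^ (a - 2) * (2 * t * d) := by
            apply mul_le_mul_of_nonneg_left (by nlinarith) (Real.rpow_nonneg ht.le _)
        _ = 2 * (t ^ (a - 2) * t) * d := by ring
        _ = 2 * t ^ (a - 1) * d := by rw [e]
    have hP2 : ‖((t ^ (a - 2) - s ^ (a - 2) : ℝ)) • v ^ 2‖ ≤ (a + 1) * t ^ (a - 1) * d := by
      rw [norm_smul, Real.norm_eq_abs, norm_pow]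
      rcases eq_or_lt_of_le hs with hs0 | hs0
      · have hv0 : v = 0 := norm_eq_zero.mp hs0.symm
        rw [hv0]
        simpa using mul_nonneg (mul_nonneg (show (0:ℝ) ≤ a + 1 by linarith) hta1) hd
      · have hv2 : (s : ℝ) ^ (2:ℕ) = s ^ (2:ℝ) := by
          rw [← Real.rpow_natCast s 2]; norm_num
        rw [hv2]
        calc |t ^ (a - 2) - s ^ (a - 2)| * s ^ (2:ℝ)
            ≤ (a + 1) * t ^ (a - 1) * (t - s) := L2 ha hs0 hvu
          _ ≤ (a + 1) * t ^ (a - 1) * d := by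
              apply mul_le_mul_of_nonneg_left htsd
              positivity
    have hT2 : ‖(t ^ (a - 2) : ℝ) • u ^ 2 - (s ^ (a - 2) : ℝ) • v ^ 2‖ ≤
        (a + 3) * t ^ (a - 1) * d := by
      rw [hsplit]
      calc ‖_ + _‖ ≤ ‖(t ^ (a - 2) : ℝ) • (u ^ 2 - v ^ 2)‖ +
            ‖((t ^ (a - 2) - s ^ (a - 2) : ℝ)) • v ^ 2‖ := norm_add_le _ _
        _ ≤ 2 * t ^ (a - 1) * d + (a + 1) * t ^ (a - 1) * d := add_le_add hP1 hP2
        _ = (a + 3) * t ^ (a - 1) * d := by ring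
    calc |t ^ a - s ^ a| + ‖(t ^ (a - 2) : ℝ) • u ^ 2 - (s ^ (a - 2) : ℝ) • v ^ 2‖
        ≤ a * t ^ (a - 1) * d + (a + 3) * t ^ (a - 1) * d := add_le_add hT1 hT2
      _ ≤ (2 * a + 4) * (t ^ (a - 1) + s ^ (a - 1)) * d := by
          nlinarith [mul_nonneg hta1 hd,
            mul_nonneg (mul_nonneg (show (0:ℝ) ≤ 2 * a + 4 by linarith) hsa1) hd]

/-- For `a ≥ 1` there is a constant `C(a)` such that for all complex `u, v`:
`| |u|^a - |v|^a | + | |u|^{a-2} u² - |v|^{a-2} v² | ≤ C(a)(|u|^{a-1} + |v|^{a-1}) |u - v|`.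
(When `u = 0` and `a < 2`, `‖u‖ ^ (a-2) = 0` by the convention `0 ^ x = 0` for `x ≠ 0`,
matching the interpretation of `|u|^{a-2} u²` as `0` there.) -/
theorem abs_rpow_sub_add_sq_le (a : ℝ) (ha : 1 ≤ a) :
    ∃ C : ℝ, ∀ u v : ℂ,
      |‖u‖ ^ a - ‖v‖ ^ a| + ‖(‖u‖ ^ (a - 2) : ℝ) • u ^ 2 - (‖v‖ ^ (a - 2) : ℝ) • v ^ 2‖ ≤
        C * (‖u‖ ^ (a - 1) + ‖v‖ ^ (a - 1)) * ‖u - v‖ := by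
  refine ⟨2 * a + 4, fun u v => ?_⟩
  rcases le_total ‖v‖ ‖u‖ with h | h
  · exact main_aux ha u v h
  · have h2 := main_aux ha v u h
    calc |‖u‖ ^ a - ‖v‖ ^ a| + ‖(‖u‖ ^ (a - 2) : ℝ) • u ^ 2 - (‖v‖ ^ (a - 2) : ℝ) • v ^ 2‖
        = |‖v‖ ^ a - ‖u‖ ^ a| + ‖(‖v‖ ^ (a - 2) : ℝ) • v ^ 2 - (‖u‖ ^ (a - 2) : ℝ) • u ^ 2‖ := by
          rw [abs_sub_comm, norm_sub_rev]
      _ ≤ (2 * a + 4) * (‖v‖ ^ (a - 1) + ‖u‖ ^ (a - 1)) * ‖v - u‖ := h2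
      _ = (2 * a + 4) * (‖u‖ ^ (a - 1) + ‖v‖ ^ (a - 1)) * ‖u - v‖ := by
          rw [norm_sub_rev]; ring
end

section
/- Let N ≥ 5, γ = 2(N-2)/(N-4), ρ = 2N(N-2)/(N²-4N+8), ρ* = 2N(N-2)/(N-4)², 2* = 2N/(N-4), T > 0. Suppose v : [0,T] → L^{ρ*}(ℝ^N) is such that v ∈ L^γ((0,T), L^{ρ*}), v_t ∈ L^γ((0,T), L^ρ), and v(0) = 0. Then ‖v‖_{L^∞((0,T), L^{2*})}^γ ≤ γ ‖v‖_{L^γ((0,T), L^{ρ*})}^{γ-1} ‖v_t‖_{L^γ((0,T), L^ρ)}. -/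
open MeasureTheory ENNReal

/-- The mixed space-time norm `‖u‖_{L^q(μ, L^r(ℝ^N))}` of `u : ℝ → ℝ^N → ℂ`. -/
noncomputable def mixedNorm {N : ℕ} (q r : ℝ≥0∞) (μ : Measure ℝ)
    (u : ℝ → (Fin N → ℝ) → ℂ) : ℝ≥0∞ :=
  if q = ∞ then essSup (fun t => eLpNorm (u t) r volume) μ
  else (∫⁻ t, (eLpNorm (u t) r volume) ^ q.toReal ∂μ) ^ (1 / q.toReal)

/-- `γ = 2(N-2)/(N-4)` -/
noncomputable def gammaExp (N : ℕ) : ℝ := 2 * ((N : ℝ) - 2) / ((N : ℝ) - 4)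
/-- `ρ = 2N(N-2)/(N²-4N+8)` -/
noncomputable def rhoExp (N : ℕ) : ℝ :=
  2 * (N : ℝ) * ((N : ℝ) - 2) / ((N : ℝ) ^ 2 - 4 * (N : ℝ) + 8)
/-- `ρ* = 2N(N-2)/(N-4)²` -/
noncomputable def rhoStarExp (N : ℕ) : ℝ := 2 * (N : ℝ) * ((N : ℝ) - 2) / ((N : ℝ) - 4) ^ 2
/-- `2* = 2N/(N-4)` -/
noncomputable def twoStarExp (N : ℕ) : ℝ := 2 * (N : ℝ) / ((N : ℝ) - 4)


section AuxiliaryLemmas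

open Set

lemma ofReal_norm_eq_coe_nnnorm {E : Type*} [SeminormedAddGroup E] (x : E) :
    ENNReal.ofReal ‖x‖ = (‖x‖₊ : ℝ≥0∞) := by
  rw [ofReal_norm, enorm_eq_nnnorm]

lemma eLpNorm_eq_lintegral_rpow_nnnorm {α F : Type*} [MeasurableSpace α] [NormedAddCommGroup F]
    {p : ℝ≥0∞} {μ : Measure α} (h0 : p ≠ 0) (htop : p ≠ ∞) {f : α → F} :
    eLpNorm f p μ = (∫⁻ x, (‖f x‖₊ : ℝ≥0∞) ^ p.toReal ∂μ) ^ (1 / p.toReal) := by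
  rw [eLpNorm_eq_lintegral_rpow_enorm_toReal h0 htop]
  simp only [enorm_eq_nnnorm]

lemma aux_int_rpow {p : ℝ} (hp : 0 ≤ p) {a : ℝ} (ha : 0 ≤ a) :
    ∫⁻ l in Set.Ioc 0 a, ENNReal.ofReal ((p + 1) * l ^ p) = ENNReal.ofReal (a ^ (p + 1)) := by
  have hp1 : -1 < p := by linarith
  have hint : IntervalIntegrable (fun l : ℝ => (p + 1) * l ^ p) volume 0 a :=
    (intervalIntegral.intervalIntegrable_rpow' hp1).const_mul _
  have hreal : ∫ l in Set.Ioc (0:ℝ) a, (p + 1) * l ^ p = a ^ (p + 1) := by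
    rw [← intervalIntegral.integral_of_le ha, intervalIntegral.integral_const_mul,
      integral_rpow (Or.inl hp1), Real.zero_rpow (by positivity)]
    field_simp
    rw [sub_zero]
  rw [← hreal, ← ofReal_integral_eq_lintegral_ofReal]
  · exact (intervalIntegrable_iff_integrableOn_Ioc_of_le ha).mp hint
  · filter_upwards [ae_restrict_mem measurableSet_Ioc] with l hl
    have : (0:ℝ) ≤ l ^ p := Real.rpow_nonneg hl.1.le p
    positivity

lemma aux_int_rpow_sub {γ : ℝ} (hγ : 2 ≤ γ) {M : ℝ} (hM : 0 ≤ M) :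
    ∫ l in (0:ℝ)..M, (γ - 1) * l ^ (γ - 2) * (M - l) = M ^ γ / γ := by
  rcases eq_or_lt_of_le hM with h0 | hM
  · rw [← h0]
    simp [Real.zero_rpow (by positivity : γ ≠ 0)]
  have h2 : -1 < γ - 2 := by linarith
  have h1 : -1 < γ - 1 := by linarith
  have hint2 : IntervalIntegrable (fun l : ℝ => l ^ (γ - 2)) volume 0 M :=
    intervalIntegral.intervalIntegrable_rpow' h2
  have hint1 : IntervalIntegrable (fun l : ℝ => l ^ (γ - 1)) volume 0 M :=
    intervalIntegral.intervalIntegrable_rpow' h1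
  have hcongr : ∀ l ∈ Set.uIcc (0:ℝ) M, (γ - 1) * l ^ (γ - 2) * (M - l)
      = (γ - 1) * M * l ^ (γ - 2) - (γ - 1) * l ^ (γ - 1) := by
    intro l hl
    rw [Set.uIcc_of_le hM.le] at hl
    have key : l ^ (γ - 1) = l ^ (γ - 2) * l := by
      rcases eq_or_lt_of_le hl.1 with hl0 | hl0
      · rw [← hl0, Real.zero_rpow (by linarith : γ - 1 ≠ 0), mul_zero]
      · rw [← Real.rpow_add_one (ne_of_gt hl0)]
        ring_nf
    rw [key]; ring
  rw [intervalIntegral.integral_congr hcongr, intervalIntegral.integral_sub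
      (hint2.const_mul _) (hint1.const_mul _),
    intervalIntegral.integral_const_mul, intervalIntegral.integral_const_mul,
    integral_rpow (Or.inl h2), integral_rpow (Or.inl h1),
    Real.zero_rpow (by linarith : γ - 2 + 1 ≠ 0), Real.zero_rpow (by linarith : γ - 1 + 1 ≠ 0)]
  have e1 : γ - 2 + 1 = γ - 1 := by ring
  have e2 : γ - 1 + 1 = γ := by ring
  rw [e1, e2]
  have hMγ : M ^ γ = M ^ (γ - 1) * M := by
    rw [← Real.rpow_add_one (ne_of_gt hM)]; ring_nf
  rw [hMγ]
  have hγ1 : γ - 1 ≠ 0 := by linarith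
  have hγ0 : γ ≠ 0 := by linarith
  field_simp
  ring

lemma pointwise_bound {γ : ℝ} (hγ : 2 ≤ γ) {t : ℝ} (ht : 0 ≤ t) (f g : ℝ → ℂ)
    (hfm : Measurable f) (hgm : Measurable g)
    (hf : ∀ s ∈ Set.Icc 0 t, f s = ∫ u in (0:ℝ)..s, g u) :
    (‖f t‖₊ : ℝ≥0∞) ^ γ ≤
      ENNReal.ofReal γ * ∫⁻ s in Set.Ioc 0 t, (‖f s‖₊ : ℝ≥0∞) ^ (γ - 1) * (‖g s‖₊ : ℝ≥0∞) := by
  have hγ0 : (0:ℝ) < γ := by linarith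
  have h0t : (0:ℝ) ∈ Set.Icc 0 t := ⟨le_rfl, ht⟩
  have htt : t ∈ Set.Icc 0 t := ⟨ht, le_rfl⟩
  by_cases hint : IntervalIntegrable g volume 0 t
  swap
  · rw [hf t htt, intervalIntegral.integral_undef hint]
    simp [ENNReal.zero_rpow_of_pos hγ0]
  set M := ‖f t‖ with hM_def
  rcases eq_or_lt_of_le (norm_nonneg (f t)) with hM0 | hMpos
  · have hft : f t = 0 := norm_eq_zero.mp hM0.symm
    rw [hft]
    simp [ENNReal.zero_rpow_of_pos hγ0]
  -- notation
  set W : ℝ → ℝ → ℝ≥0∞ := fun l s => if l < ‖f s‖ then (‖g s‖₊ : ℝ≥0∞) else 0 with hW_def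
  have hf0 : f 0 = 0 := by rw [hf 0 h0t, intervalIntegral.integral_same]
  -- continuity of the primitive
  have hcont : ContinuousOn (fun s => ‖f s‖) (Set.Icc 0 t) := by
    have h1 : ContinuousOn (fun s => ∫ u in (0:ℝ)..s, g u) (Set.Icc 0 t) := by
      have := intervalIntegral.continuousOn_primitive_interval
        (μ := volume) (f := g) (b := t) (a := (0:ℝ)) ?_
      · rwa [Set.uIcc_of_le ht] at this
      · rw [Set.uIcc_of_le ht]
        exact (intervalIntegrable_iff_integrableOn_Icc_of_le ht).mp hint
    exact (h1.congr fun s hs => hf s hs).norm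
  -- the key per-level claim
  have key : ∀ l : ℝ, 0 < l →
      ENNReal.ofReal (M - l) ≤ ∫⁻ s in Set.Ioc 0 t, W l s := by
    intro l hl
    set S := Set.Icc 0 t ∩ (fun s => ‖f s‖) ⁻¹' Set.Iic l with hS_def
    have hS_closed : IsClosed S := hcont.preimage_isClosed_of_isClosed isClosed_Icc isClosed_Iic
    have hS_ne : (0:ℝ) ∈ S := by
      refine ⟨h0t, ?_⟩
      simp only [Set.mem_preimage, Set.mem_Iic, hf0, norm_zero]
      exact hl.le
    have hS_bdd : BddAbove S := BddAbove.mono Set.inter_subset_left bddAbove_Icc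
    set s₀ := sSup S with hs₀_def
    have hs₀S : s₀ ∈ S := hS_closed.csSup_mem ⟨0, hS_ne⟩ hS_bdd
    obtain ⟨⟨hs₀0, hs₀t⟩, hs₀l⟩ := hs₀S
    rw [Set.mem_preimage, Set.mem_Iic] at hs₀l
    have hbig : ∀ s ∈ Set.Ioc s₀ t, l < ‖f s‖ := by
      intro s hs
      by_contra hcon
      push_neg at hcon
      have hsS : s ∈ S := ⟨⟨le_trans hs₀0 hs.1.le, hs.2⟩, hcon⟩
      exact absurd (le_csSup hS_bdd hsS) (not_le.mpr hs.1)
    have hgs₀ : IntervalIntegrable g volume 0 s₀ := by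
      apply hint.mono_set
      rw [Set.uIcc_of_le hs₀0, Set.uIcc_of_le ht]
      exact Set.Icc_subset_Icc le_rfl hs₀t
    have hsub : f t - f s₀ = ∫ u in s₀..t, g u := by
      rw [hf t htt, hf s₀ ⟨hs₀0, hs₀t⟩]
      exact intervalIntegral.integral_interval_sub_left hint hgs₀
    calc ENNReal.ofReal (M - l)
        ≤ ENNReal.ofReal (M - ‖f s₀‖) := ENNReal.ofReal_le_ofReal (by linarith)
      _ ≤ ENNReal.ofReal ‖f t - f s₀‖ := ENNReal.ofReal_le_ofReal (norm_sub_norm_le _ _)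
      _ = (‖∫ s in Set.Ioc s₀ t, g s‖₊ : ℝ≥0∞) := by
          rw [hsub, intervalIntegral.integral_of_le hs₀t, ofReal_norm_eq_coe_nnnorm]
      _ ≤ ∫⁻ s in Set.Ioc s₀ t, (‖g s‖₊ : ℝ≥0∞) := by simpa only [enorm_eq_nnnorm] using enorm_integral_le_lintegral_enorm _
      _ = ∫⁻ s in Set.Ioc s₀ t, W l s := by
          refine setLIntegral_congr_fun measurableSet_Ioc (fun s hs => ?_)
          rw [hW_def]
          simp only [if_pos (hbig s hs)]
      _ ≤ ∫⁻ s in Set.Ioc 0 t, W l s := lintegral_mono_set (Set.Ioc_subset_Ioc hs₀0 le_rfl)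
  -- measurability of W joint
  have hWm : Measurable (Function.uncurry W) := by
    apply Measurable.ite
    · exact measurableSet_lt measurable_fst (hfm.norm.comp measurable_snd)
    · exact (hgm.nnnorm.comp measurable_snd).coe_nnreal_ennreal
    · exact measurable_const
  have hc_m : Measurable fun l : ℝ => ENNReal.ofReal ((γ - 1) * l ^ (γ - 2)) := by fun_prop
  -- main chain
  have lhs_eq : (‖f t‖₊ : ℝ≥0∞) ^ γ = ENNReal.ofReal γ * ENNReal.ofReal (M ^ γ / γ) := by
    rw [← ofReal_norm_eq_coe_nnnorm, ENNReal.ofReal_rpow_of_nonneg (norm_nonneg _) hγ0.le,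
      ← ENNReal.ofReal_mul hγ0.le, mul_div_cancel₀ _ (ne_of_gt hγ0)]
  rw [lhs_eq]
  apply mul_le_mul_right ?_ _
  -- express M^γ/γ via layer cake
  have step1 : ENNReal.ofReal (M ^ γ / γ)
      = ∫⁻ l in Set.Ioc 0 M, ENNReal.ofReal ((γ - 1) * l ^ (γ - 2) * (M - l)) := by
    rw [← aux_int_rpow_sub hγ hMpos.le, intervalIntegral.integral_of_le hMpos.le,
      ofReal_integral_eq_lintegral_ofReal]
    · have : IntervalIntegrable (fun l : ℝ => (γ - 1) * l ^ (γ - 2) * (M - l)) volume 0 M := by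
        apply IntervalIntegrable.mul_continuousOn
        · exact (intervalIntegral.intervalIntegrable_rpow' (by linarith)).const_mul _
        · exact (continuous_const.sub continuous_id).continuousOn
      exact (intervalIntegrable_iff_integrableOn_Ioc_of_le hMpos.le).mp this
    · filter_upwards [ae_restrict_mem measurableSet_Ioc] with l hl
      have h1 : (0:ℝ) ≤ l ^ (γ - 2) := Real.rpow_nonneg hl.1.le _
      have h2 : l ≤ M := hl.2
      have h3 : (0:ℝ) ≤ γ - 1 := by linarith
      have := mul_nonneg (mul_nonneg h3 h1) (by linarith : (0:ℝ) ≤ M - l)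
      exact this
  rw [step1]
  calc ∫⁻ l in Set.Ioc 0 M, ENNReal.ofReal ((γ - 1) * l ^ (γ - 2) * (M - l))
      ≤ ∫⁻ l in Set.Ioc 0 M,
          ENNReal.ofReal ((γ - 1) * l ^ (γ - 2)) * ∫⁻ s in Set.Ioc 0 t, W l s := by
        refine setLIntegral_mono' measurableSet_Ioc fun l hl => ?_
        have h1 : (0:ℝ) ≤ l ^ (γ - 2) := Real.rpow_nonneg hl.1.le _
        rw [ENNReal.ofReal_mul (mul_nonneg (by linarith : (0:ℝ) ≤ γ - 1) h1)]
        exact mul_le_mul_right (key l hl.1) _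
    _ = ∫⁻ l in Set.Ioc 0 M, ∫⁻ s in Set.Ioc 0 t,
          ENNReal.ofReal ((γ - 1) * l ^ (γ - 2)) * W l s := by
        refine setLIntegral_congr_fun measurableSet_Ioc (fun l hl => ?_)
        exact (lintegral_const_mul _ (hWm.comp measurable_prodMk_left)).symm
    _ = ∫⁻ s in Set.Ioc 0 t, ∫⁻ l in Set.Ioc 0 M,
          ENNReal.ofReal ((γ - 1) * l ^ (γ - 2)) * W l s := by
        apply lintegral_lintegral_swap
        exact ((hc_m.comp measurable_fst).mul hWm).aemeasurable
    _ ≤ ∫⁻ s in Set.Ioc 0 t, (‖f s‖₊ : ℝ≥0∞) ^ (γ - 1) * (‖g s‖₊ : ℝ≥0∞) := by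
        refine lintegral_mono fun s => ?_
        calc ∫⁻ l in Set.Ioc 0 M, ENNReal.ofReal ((γ - 1) * l ^ (γ - 2)) * W l s
            ≤ ∫⁻ l in Set.Ioc 0 M,
                (Set.Iio ‖f s‖).indicator
                  (fun l => ENNReal.ofReal ((γ - 1) * l ^ (γ - 2))) l * (‖g s‖₊ : ℝ≥0∞) := by
              refine lintegral_mono fun l => ?_
              by_cases hls : l < ‖f s‖
              · simp only [hW_def, if_pos hls, Set.indicator_of_mem (Set.mem_Iio.mpr hls)]
                exact le_refl _
              · simp only [hW_def, if_neg hls, mul_zero]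
                exact zero_le
          _ = (∫⁻ l in Set.Iio ‖f s‖ ∩ Set.Ioc 0 M,
                ENNReal.ofReal ((γ - 1) * l ^ (γ - 2))) * (‖g s‖₊ : ℝ≥0∞) := by
              rw [lintegral_mul_const _ (hc_m.indicator measurableSet_Iio),
                lintegral_indicator measurableSet_Iio, Measure.restrict_restrict measurableSet_Iio]
          _ ≤ (∫⁻ l in Set.Ioc 0 ‖f s‖,
                ENNReal.ofReal ((γ - 1) * l ^ (γ - 2))) * (‖g s‖₊ : ℝ≥0∞) := by
              refine mul_le_mul_left (lintegral_mono_set fun l hl => ?_) _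
              exact ⟨hl.2.1, le_of_lt hl.1⟩
          _ = (‖f s‖₊ : ℝ≥0∞) ^ (γ - 1) * (‖g s‖₊ : ℝ≥0∞) := by
              have := aux_int_rpow (p := γ - 2) (by linarith) (norm_nonneg (f s))
              rw [show γ - 2 + 1 = γ - 1 by ring] at this
              rw [this, ← ofReal_norm_eq_coe_nnnorm (f s),
                ENNReal.ofReal_rpow_of_nonneg (norm_nonneg _) (by linarith : (0:ℝ) ≤ γ - 1)]

lemma rpow_iSup_nat (a : ℕ → ℝ≥0∞) {r : ℝ} (hr : 0 < r) :
    (⨆ n, a n) ^ r = ⨆ n, a n ^ r := by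
  have hinv : ∀ x : ℝ≥0∞, (x ^ r) ^ (1 / r) = x := fun x => by
    rw [← ENNReal.rpow_mul, mul_one_div, div_self (ne_of_gt hr), ENNReal.rpow_one]
  apply le_antisymm
  · have h1 : ∀ n, a n ≤ (⨆ m, a m ^ r) ^ (1 / r) := fun n => by
      rw [← hinv (a n)]
      exact ENNReal.rpow_le_rpow (le_iSup (fun m => a m ^ r) n) (by positivity)
    calc (⨆ n, a n) ^ r ≤ ((⨆ m, a m ^ r) ^ (1 / r)) ^ r :=
          ENNReal.rpow_le_rpow (iSup_le h1) hr.le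
      _ = ⨆ m, a m ^ r := by
          rw [← ENNReal.rpow_mul, one_div_mul_cancel (ne_of_gt hr), ENNReal.rpow_one]
  · exact iSup_le fun n => ENNReal.rpow_le_rpow (le_iSup a n) hr.le

lemma iSup_min_nat (a : ℝ≥0∞) : ⨆ n : ℕ, min a (n : ℝ≥0∞) = a := by
  apply le_antisymm (iSup_le fun n => min_le_left _ _)
  by_cases ha : a = ∞
  · rw [ha]
    have : ∀ n : ℕ, (n : ℝ≥0∞) = min ⊤ (n : ℝ≥0∞) := fun n => (min_eq_right le_top).symm
    calc (⊤:ℝ≥0∞) = ⨆ n : ℕ, (n : ℝ≥0∞) := ENNReal.iSup_natCast.symm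
      _ ≤ ⨆ n : ℕ, min ⊤ (n : ℝ≥0∞) := iSup_mono fun n => le_of_eq (this n)
  · obtain ⟨n, hn⟩ := ENNReal.exists_nat_gt ha
    calc a = min a n := (min_eq_left hn.le).symm
      _ ≤ ⨆ m : ℕ, min a (m : ℝ≥0∞) := le_iSup (fun m : ℕ => min a (m : ℝ≥0∞)) n

section Minkowski

variable {α β : Type*} [MeasurableSpace α] [MeasurableSpace β]

lemma minkowski_core (μ : Measure α) (ν : Measure β) [SFinite μ] [SFinite ν]
    (F : β → α → ℝ≥0∞) (hF : Measurable (Function.uncurry F)) {r : ℝ} (hr : 1 < r)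
    (hA : (∫⁻ x, (∫⁻ s, F s x ∂ν) ^ r ∂μ) ≠ ∞) :
    (∫⁻ x, (∫⁻ s, F s x ∂ν) ^ r ∂μ) ^ (1/r) ≤ ∫⁻ s, (∫⁻ x, F s x ^ r ∂μ) ^ (1/r) ∂ν := by
  have hr0 : (0:ℝ) < r := by linarith
  set q : ℝ := r / (r - 1) with hq_def
  have hconj : r.HolderConjugate q := Real.HolderConjugate.conjExponent hr
  have hrq : (r - 1) * q = r := hconj.sub_one_mul_conj
  set A := ∫⁻ x, (∫⁻ s, F s x ∂ν) ^ r ∂μ with hA_def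
  set B := ∫⁻ s, (∫⁻ x, F s x ^ r ∂μ) ^ (1/r) ∂ν with hB_def
  by_cases hA0 : A = 0
  · rw [hA0, ENNReal.zero_rpow_of_pos (by positivity)]
    exact zero_le
  -- measurability
  have hswap : Measurable (Function.uncurry fun x s => F s x) :=
    hF.comp measurable_swap
  have hIm : Measurable fun x => ∫⁻ s, F s x ∂ν := hswap.lintegral_prod_right'
  set G : α → ℝ≥0∞ := fun x => (∫⁻ s, F s x ∂ν) ^ (r - 1) with hG_def
  have hGm : Measurable G := hIm.pow_const _
  have hpow : ∀ X : ℝ≥0∞, X ^ r = X * X ^ (r - 1) := by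
    intro X
    rcases eq_or_ne X 0 with h0 | h0
    · rw [h0, ENNReal.zero_rpow_of_pos hr0, ENNReal.zero_rpow_of_pos (by linarith), mul_zero]
    rcases eq_or_ne X ∞ with hT | hT
    · rw [hT, ENNReal.top_rpow_of_pos hr0, ENNReal.top_rpow_of_pos (by linarith), ENNReal.top_mul_top]
    · nth_rewrite 2 [← ENNReal.rpow_one X]
      rw [← ENNReal.rpow_add _ _ h0 hT]
      norm_num
  have hA2 : A = ∫⁻ s, ∫⁻ x, F s x * G x ∂μ ∂ν := by
    rw [hA_def]
    rw [← lintegral_lintegral_swap (((hF.comp measurable_swap).mul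
      (hGm.comp measurable_fst)).aemeasurable)]
    refine lintegral_congr fun x => ?_
    rw [hpow (∫⁻ s, F s x ∂ν)]
    rw [show (∫⁻ s, F s x ∂ν) ^ (r - 1) = G x from rfl]
    exact (lintegral_mul_const _ (hF.comp (measurable_prodMk_right))).symm
  have hGq : ∫⁻ x, G x ^ q ∂μ = A := by
    refine lintegral_congr fun x => ?_
    rw [hG_def, ← ENNReal.rpow_mul, hrq]
  have hAB : A ≤ B * A ^ (1/q) := by
    calc A = ∫⁻ s, ∫⁻ x, F s x * G x ∂μ ∂ν := hA2
      _
        ≤ ∫⁻ s, (∫⁻ x, F s x ^ r ∂μ) ^ (1/r) * (∫⁻ x, G x ^ q ∂μ) ^ (1/q) ∂ν := by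
          refine lintegral_mono fun s => ?_
          exact ENNReal.lintegral_mul_le_Lp_mul_Lq μ hconj
            (hF.comp measurable_prodMk_left).aemeasurable hGm.aemeasurable
      _ = ∫⁻ s, (∫⁻ x, F s x ^ r ∂μ) ^ (1/r) * A ^ (1/q) ∂ν := by
          refine lintegral_congr fun s => by rw [hGq]
      _ = B * A ^ (1/q) := by
          have hFr : Measurable (Function.uncurry fun s x => F s x ^ r) := hF.pow_const _
          exact lintegral_mul_const _ (hFr.lintegral_prod_right'.pow_const _)
  -- conclude
  have hq0 : (0:ℝ) < 1/q := by
    have := hconj.symm.pos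
    positivity
  have hsplit : A = A ^ (1/r) * A ^ (1/q) := by
    rw [← ENNReal.rpow_add _ _ hA0 hA, one_div, one_div, hconj.inv_add_inv_eq_one,
      ENNReal.rpow_one]
  have hfin : A ^ (1/q) ≠ ∞ := by
    exact ENNReal.rpow_ne_top_of_nonneg hq0.le hA
  have hnz : A ^ (1/q) ≠ 0 := by
    simp only [ne_eq, ENNReal.rpow_eq_zero_iff, not_or]
    constructor
    · rintro ⟨h, _⟩; exact hA0 h
    · rintro ⟨h, _⟩; exact hA h
  rw [← ENNReal.mul_le_mul_iff_left hnz hfin, ← hsplit]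
  exact hAB


lemma minkowski_lintegral (μ : Measure α) (ν : Measure β) [SigmaFinite μ] [SigmaFinite ν]
    (F : β → α → ℝ≥0∞) (hF : Measurable (Function.uncurry F)) {r : ℝ} (hr : 1 < r) :
    (∫⁻ x, (∫⁻ s, F s x ∂ν) ^ r ∂μ) ^ (1/r) ≤ ∫⁻ s, (∫⁻ x, F s x ^ r ∂μ) ^ (1/r) ∂ν := by
  have hr0 : (0:ℝ) < r := by linarith
  set B := ∫⁻ s, (∫⁻ x, F s x ^ r ∂μ) ^ (1/r) ∂ν with hB_def
  set K : ℕ → Set α := spanningSets μ with hK_def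
  set S : ℕ → Set β := spanningSets ν with hS_def
  set Fn : ℕ → β → α → ℝ≥0∞ :=
    fun n s x => (S n).indicator (fun s' => min (F s' x) n) s with hFn_def
  have hFn_meas : ∀ n, Measurable (Function.uncurry (Fn n)) := by
    intro n
    apply Measurable.indicator
    · exact (hF.min measurable_const).comp (measurable_fst.prodMk measurable_snd)
    · exact (measurableSet_spanningSets ν n).preimage measurable_fst
  have hFn_le : ∀ n s x, Fn n s x ≤ F s x := by
    intro n s x
    by_cases hs : s ∈ S n
    · simp only [hFn_def, Set.indicator_of_mem hs]; exact min_le_left _ _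
    · simp only [hFn_def, Set.indicator_of_notMem hs]; exact zero_le
  have hFn_mono : ∀ s x, Monotone fun n => Fn n s x := by
    intro s x n m hnm
    simp only [hFn_def]
    by_cases hs : s ∈ S n
    · rw [Set.indicator_of_mem hs, Set.indicator_of_mem (monotone_spanningSets ν hnm hs)]
      exact min_le_min le_rfl (Nat.cast_le.mpr hnm)
    · rw [Set.indicator_of_notMem hs]; exact zero_le
  have hFn_sup : ∀ s x, (⨆ n, Fn n s x) = F s x := by
    intro s x
    apply le_antisymm (iSup_le fun n => hFn_le n s x)
    conv_lhs => rw [← iSup_min_nat (F s x)]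
    refine iSup_le fun m => ?_
    obtain ⟨n₀, hn₀⟩ : ∃ n₀, s ∈ S n₀ := by
      have : s ∈ ⋃ i, S i := by rw [hS_def, iUnion_spanningSets]; trivial
      exact Set.mem_iUnion.mp this
    calc min (F s x) m ≤ Fn (max m n₀) s x := by
          have hsS : s ∈ S (max m n₀) := monotone_spanningSets ν (le_max_right _ _) hn₀
          simp only [hFn_def, Set.indicator_of_mem hsS]
          exact min_le_min le_rfl (Nat.cast_le.mpr (le_max_left _ _))
      _ ≤ ⨆ n, Fn n s x := le_iSup (fun n => Fn n s x) _
  -- each truncated version is finite and satisfies the inequality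
  have hstep : ∀ n : ℕ,
      (∫⁻ x in K n, (∫⁻ s, Fn n s x ∂ν) ^ r ∂μ) ≤ B ^ r := by
    intro n
    have hinner_le : ∀ x, (∫⁻ s, Fn n s x ∂ν) ≤ n * ν (S n) := by
      intro x
      calc ∫⁻ s, Fn n s x ∂ν ≤ ∫⁻ s, (S n).indicator (fun _ => (n:ℝ≥0∞)) s ∂ν := by
            refine lintegral_mono fun s => ?_
            exact Set.indicator_le_indicator' (fun _ => min_le_right _ _)
        _ = n * ν (S n) := by
            rw [lintegral_indicator (measurableSet_spanningSets ν n), setLIntegral_const]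
    have hAn_fin : (∫⁻ x in K n, (∫⁻ s, Fn n s x ∂ν) ^ r ∂μ) ≠ ∞ := by
      have hb : ((n:ℝ≥0∞) * ν (S n)) ^ r * μ (K n) ≠ ∞ := by
        apply ENNReal.mul_ne_top
        · exact (ENNReal.rpow_lt_top_of_nonneg hr0.le
            (ENNReal.mul_ne_top (by simp) (measure_spanningSets_lt_top ν n).ne)).ne
        · exact (measure_spanningSets_lt_top μ n).ne
      refine ne_of_lt (lt_of_le_of_lt ?_ (lt_top_iff_ne_top.mpr hb))
      calc ∫⁻ x in K n, (∫⁻ s, Fn n s x ∂ν) ^ r ∂μ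
          ≤ ∫⁻ _ in K n, ((n:ℝ≥0∞) * ν (S n)) ^ r ∂μ := by
            refine setLIntegral_mono' (measurableSet_spanningSets μ n) fun x _ => ?_
            exact ENNReal.rpow_le_rpow (hinner_le x) hr0.le
        _ = ((n:ℝ≥0∞) * ν (S n)) ^ r * μ (K n) := by rw [setLIntegral_const]
    have hcore := minkowski_core (μ.restrict (K n)) ν (Fn n) (hFn_meas n) hr hAn_fin
    have hBn_le : (∫⁻ s, (∫⁻ x in K n, Fn n s x ^ r ∂μ) ^ (1/r) ∂ν) ≤ B := by
      refine lintegral_mono fun s => ?_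
      refine ENNReal.rpow_le_rpow ?_ (by positivity)
      calc ∫⁻ x in K n, Fn n s x ^ r ∂μ
          ≤ ∫⁻ x in K n, F s x ^ r ∂μ :=
            lintegral_mono fun x => ENNReal.rpow_le_rpow (hFn_le n s x) hr0.le
        _ ≤ ∫⁻ x, F s x ^ r ∂μ := setLIntegral_le_lintegral _ _
    have h1 : (∫⁻ x in K n, (∫⁻ s, Fn n s x ∂ν) ^ r ∂μ) ^ (1/r) ≤ B :=
      le_trans hcore hBn_le
    calc ∫⁻ x in K n, (∫⁻ s, Fn n s x ∂ν) ^ r ∂μ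
        = ((∫⁻ x in K n, (∫⁻ s, Fn n s x ∂ν) ^ r ∂μ) ^ (1/r)) ^ r := by
          rw [← ENNReal.rpow_mul, one_div, inv_mul_cancel₀ (ne_of_gt hr0), ENNReal.rpow_one]
      _ ≤ B ^ r := ENNReal.rpow_le_rpow h1 hr0.le
  -- pass to the limit
  have hlim : (∫⁻ x, (∫⁻ s, F s x ∂ν) ^ r ∂μ) ≤ B ^ r := by
    have hmono : Monotone fun n x =>
        (K n).indicator (fun x' => (∫⁻ s, Fn n s x' ∂ν) ^ r) x := by
      intro n m hnm x
      simp only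
      by_cases hx : x ∈ K n
      · rw [Set.indicator_of_mem hx,
          Set.indicator_of_mem (monotone_spanningSets μ hnm hx)]
        exact ENNReal.rpow_le_rpow (lintegral_mono fun s => hFn_mono s x hnm) hr0.le
      · rw [Set.indicator_of_notMem hx]; exact zero_le
    have hmeas : ∀ n, Measurable fun x =>
        (K n).indicator (fun x' => (∫⁻ s, Fn n s x' ∂ν) ^ r) x := by
      intro n
      apply Measurable.indicator
      · exact (((hFn_meas n).comp measurable_swap).lintegral_prod_right').pow_const _
      · exact measurableSet_spanningSets μ n
    have hsup_eq : ∀ x, (⨆ n, (K n).indicator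
        (fun x' => (∫⁻ s, Fn n s x' ∂ν) ^ r) x) = (∫⁻ s, F s x ∂ν) ^ r := by
      intro x
      apply le_antisymm
      · refine iSup_le fun n => ?_
        refine le_trans (Set.indicator_le_self _ _ x) ?_
        exact ENNReal.rpow_le_rpow (lintegral_mono fun s => hFn_le n s x) hr0.le
      · have : (∫⁻ s, F s x ∂ν) ^ r = ⨆ n, (∫⁻ s, Fn n s x ∂ν) ^ r := by
          rw [← rpow_iSup_nat _ hr0]
          congr 1
          have hm : ∀ n, Measurable fun s => Fn n s x :=
            fun n => (hFn_meas n).comp measurable_prodMk_right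
          rw [← lintegral_iSup hm (fun n m hnm s => hFn_mono s x hnm)]
          exact lintegral_congr fun s => (hFn_sup s x).symm
        rw [this]
        refine iSup_le fun n => ?_
        obtain ⟨n₀, hn₀⟩ : ∃ n₀, x ∈ K n₀ := by
          have : x ∈ ⋃ i, K i := by rw [hK_def, iUnion_spanningSets]; trivial
          exact Set.mem_iUnion.mp this
        calc (∫⁻ s, Fn n s x ∂ν) ^ r
            ≤ (K (max n n₀)).indicator
                (fun x' => (∫⁻ s, Fn (max n n₀) s x' ∂ν) ^ r) x := by
              rw [Set.indicator_of_mem (monotone_spanningSets μ (le_max_right _ _) hn₀)]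
              exact ENNReal.rpow_le_rpow
                (lintegral_mono fun s => hFn_mono s x (le_max_left _ _)) hr0.le
          _ ≤ ⨆ m, (K m).indicator (fun x' => (∫⁻ s, Fn m s x' ∂ν) ^ r) x :=
              le_iSup (fun m => (K m).indicator (fun x' => (∫⁻ s, Fn m s x' ∂ν) ^ r) x) _
    calc ∫⁻ x, (∫⁻ s, F s x ∂ν) ^ r ∂μ
        = ∫⁻ x, ⨆ n, (K n).indicator (fun x' => (∫⁻ s, Fn n s x' ∂ν) ^ r) x ∂μ :=
          lintegral_congr fun x => (hsup_eq x).symm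
      _ = ⨆ n, ∫⁻ x, (K n).indicator (fun x' => (∫⁻ s, Fn n s x' ∂ν) ^ r) x ∂μ :=
          lintegral_iSup hmeas hmono
      _ ≤ B ^ r := by
          refine iSup_le fun n => ?_
          rw [lintegral_indicator (measurableSet_spanningSets μ n)]
          exact hstep n
  calc (∫⁻ x, (∫⁻ s, F s x ∂ν) ^ r ∂μ) ^ (1/r)
      ≤ (B ^ r) ^ (1/r) := ENNReal.rpow_le_rpow hlim (by positivity)
    _ = B := by
        rw [← ENNReal.rpow_mul, mul_one_div, div_self (ne_of_gt hr0), ENNReal.rpow_one]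

end Minkowski

end AuxiliaryLemmas

set_option maxHeartbeats 2000000 in
/-- For `N ≥ 5` and `T > 0`: if `v ∈ L^γ((0,T), L^{ρ*})` with time derivative
`v_t ∈ L^γ((0,T), L^ρ)` and `v(0) = 0` (encoded via the fundamental theorem of calculus
`v(t) = ∫₀^t v_s ds`), then
`‖v‖_{L^∞((0,T), L^{2*})}^γ ≤ γ ‖v‖_{L^γ((0,T), L^{ρ*})}^{γ-1} ‖v_t‖_{L^γ((0,T), L^ρ)}`. -/
theorem sup_twoStar_estimate (N : ℕ) (hN : 5 ≤ N) (T : ℝ) (hT : 0 < T)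
    (v vt : ℝ → (Fin N → ℝ) → ℂ)
    (hvm : Measurable (Function.uncurry v)) (hvtm : Measurable (Function.uncurry vt))
    (hFTC : ∀ x : Fin N → ℝ, ∀ t ∈ Set.Icc (0 : ℝ) T, v t x = ∫ s in (0 : ℝ)..t, vt s x)
    (hv : mixedNorm (ENNReal.ofReal (gammaExp N)) (ENNReal.ofReal (rhoStarExp N))
      (volume.restrict (Set.Ioo 0 T)) v ≠ ∞)
    (hvt : mixedNorm (ENNReal.ofReal (gammaExp N)) (ENNReal.ofReal (rhoExp N))
      (volume.restrict (Set.Ioo 0 T)) vt ≠ ∞) :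
    mixedNorm ∞ (ENNReal.ofReal (twoStarExp N)) (volume.restrict (Set.Ioo 0 T)) v ^ gammaExp N ≤
      ENNReal.ofReal (gammaExp N) *
        mixedNorm (ENNReal.ofReal (gammaExp N)) (ENNReal.ofReal (rhoStarExp N))
          (volume.restrict (Set.Ioo 0 T)) v ^ (gammaExp N - 1) *
        mixedNorm (ENNReal.ofReal (gammaExp N)) (ENNReal.ofReal (rhoExp N))
          (volume.restrict (Set.Ioo 0 T)) vt := by
  clear hv hvt
  -- numeric setup
  have hn : (5:ℝ) ≤ (N:ℝ) := by exact_mod_cast hN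
  set n : ℝ := (N:ℝ) with hn_def
  have h4 : (0:ℝ) < n - 4 := by linarith
  have h2 : (0:ℝ) < n - 2 := by linarith
  have hn0 : (0:ℝ) < n := by linarith
  have h8 : (0:ℝ) < n^2 - 4*n + 8 := by nlinarith
  set γ : ℝ := 2 * (n - 2) / (n - 4) with hγ_def
  set ρ : ℝ := 2 * n * (n - 2) / (n^2 - 4*n + 8) with hρ_def
  set ρs : ℝ := 2 * n * (n - 2) / (n - 4)^2 with hρs_def
  set ts : ℝ := 2 * n / (n - 4) with hts_def
  set r : ℝ := n / (n - 2) with hr_def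
  set p : ℝ := 2 * (n - 2)^2 / (n * (n - 4)) with hp_def
  set q : ℝ := 2 * (n - 2)^2 / (n^2 - 4*n + 8) with hq_def
  have hγdefeq : gammaExp N = γ := rfl
  have hρdefeq : rhoExp N = ρ := rfl
  have hρsdefeq : rhoStarExp N = ρs := rfl
  have htsdefeq : twoStarExp N = ts := rfl
  have hγ2 : 2 ≤ γ := by
    rw [hγ_def, le_div_iff₀ h4]; nlinarith
  have hγpos : 0 < γ := by linarith
  have hγ1 : (0:ℝ) < γ - 1 := by linarith
  have hρpos : 0 < ρ := by rw [hρ_def]; positivity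
  have hρspos : 0 < ρs := by rw [hρs_def]; positivity
  have htspos : 0 < ts := by rw [hts_def]; positivity
  have hr1 : 1 < r := by rw [hr_def, lt_div_iff₀ h2]; linarith
  have hrpos : 0 < r := by linarith
  have hp1 : 1 < p := by rw [hp_def, lt_div_iff₀ (by positivity)]; nlinarith
  have hqpos : 0 < q := by rw [hq_def]; positivity
  have hpq : p.HolderConjugate q := by
    refine Real.holderConjugate_iff.mpr ⟨hp1, ?_⟩
    rw [hp_def, hq_def]
    field_simp
    ring
  have hγconj : (γ/(γ-1)).HolderConjugate γ := by
    refine Real.holderConjugate_iff.mpr ⟨?_, ?_⟩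
    · rw [lt_div_iff₀ hγ1]; linarith
    · field_simp
      ring
  -- key exponent identities
  have hA1 : γ * r = ts := by rw [hγ_def, hr_def, hts_def]; field_simp
  have hA2 : (γ - 1) * r * p = ρs := by
    rw [hγ_def, hr_def, hp_def, hρs_def]; field_simp; ring
  have hA3 : r * q = ρ := by rw [hr_def, hq_def, hρ_def]; field_simp
  have hA5 : (1/p) * (1/r) = (1/ρs) * (γ - 1) := by
    rw [hγ_def, hr_def, hp_def, hρs_def]; field_simp; ring
  have hA6 : (1/q) * (1/r) = 1/ρ := by
    rw [hr_def, hq_def, hρ_def]; field_simp; try ring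
  have hA7 : (γ - 1) * (γ/(γ-1)) = γ := by field_simp
  have hA8 : 1/(γ/(γ-1)) = (1/γ) * (γ - 1) := by field_simp; try ring
  have hA10 : (1/ts) * γ = 1/r := by
    rw [hγ_def, hr_def, hts_def]; field_simp
  -- ENNReal exponents
  have hofγ : (ENNReal.ofReal γ).toReal = γ := ENNReal.toReal_ofReal hγpos.le
  -- measurability basics
  have hvsec : ∀ x, Measurable fun s => v s x := fun x => hvm.comp measurable_prodMk_right
  have hvtsec : ∀ x, Measurable fun s => vt s x := fun x => hvtm.comp measurable_prodMk_right
  have hvx : ∀ s, Measurable fun x => (‖v s x‖₊ : ℝ≥0∞) :=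
    fun s => ((hvm.comp measurable_prodMk_left).nnnorm).coe_nnreal_ennreal
  have hvtx : ∀ s, Measurable fun x => (‖vt s x‖₊ : ℝ≥0∞) :=
    fun s => ((hvtm.comp measurable_prodMk_left).nnnorm).coe_nnreal_ennreal
  set H : ℝ → (Fin N → ℝ) → ℝ≥0∞ :=
    fun s x => (‖v s x‖₊ : ℝ≥0∞) ^ (γ - 1) * (‖vt s x‖₊ : ℝ≥0∞) with hH_def
  have hHm : Measurable (Function.uncurry H) := by
    apply Measurable.mul
    · exact (hvm.nnnorm.coe_nnreal_ennreal).pow_const _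
    · exact hvtm.nnnorm.coe_nnreal_ennreal
  have hIv : Measurable fun s => ∫⁻ x, (‖v s x‖₊ : ℝ≥0∞) ^ ρs := by
    exact ((hvm.nnnorm.coe_nnreal_ennreal).pow_const _).lintegral_prod_right'
  have hIvt : Measurable fun s => ∫⁻ x, (‖vt s x‖₊ : ℝ≥0∞) ^ ρ := by
    exact ((hvtm.nnnorm.coe_nnreal_ennreal).pow_const _).lintegral_prod_right'
  -- rewrite eLpNorms as lintegrals
  have hofρs : ENNReal.ofReal ρs ≠ 0 := by simp [ENNReal.ofReal_eq_zero, not_le, hρspos]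
  have hofρ : ENNReal.ofReal ρ ≠ 0 := by simp [ENNReal.ofReal_eq_zero, not_le, hρpos]
  have hofts : ENNReal.ofReal ts ≠ 0 := by simp [ENNReal.ofReal_eq_zero, not_le, htspos]
  have hv_eLp : ∀ s, eLpNorm (v s) (ENNReal.ofReal ρs) volume
      = (∫⁻ x, (‖v s x‖₊ : ℝ≥0∞) ^ ρs) ^ (1/ρs) := by
    intro s
    rw [eLpNorm_eq_lintegral_rpow_nnnorm hofρs ENNReal.ofReal_ne_top,
      ENNReal.toReal_ofReal hρspos.le]
  have hvt_eLp : ∀ s, eLpNorm (vt s) (ENNReal.ofReal ρ) volume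
      = (∫⁻ x, (‖vt s x‖₊ : ℝ≥0∞) ^ ρ) ^ (1/ρ) := by
    intro s
    rw [eLpNorm_eq_lintegral_rpow_nnnorm hofρ ENNReal.ofReal_ne_top,
      ENNReal.toReal_ofReal hρpos.le]
  set Nv : ℝ≥0∞ := (∫⁻ s in Set.Ioo 0 T,
      ((∫⁻ x, (‖v s x‖₊ : ℝ≥0∞) ^ ρs) ^ (1/ρs)) ^ γ) ^ (1/γ) with hNv_def
  set Nvt : ℝ≥0∞ := (∫⁻ s in Set.Ioo 0 T,
      ((∫⁻ x, (‖vt s x‖₊ : ℝ≥0∞) ^ ρ) ^ (1/ρ)) ^ γ) ^ (1/γ) with hNvt_def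
  set C : ℝ≥0∞ := ENNReal.ofReal γ * Nv ^ (γ - 1) * Nvt with hC_def
  -- the central estimate
  have central : ∀ t ∈ Set.Ioo (0:ℝ) T,
      eLpNorm (v t) (ENNReal.ofReal ts) volume ^ γ ≤ C := by
    intro t ht
    have ht0 : (0:ℝ) ≤ t := ht.1.le
    -- pointwise in x
    have hx : ∀ x, (‖v t x‖₊ : ℝ≥0∞) ^ ts
        ≤ (ENNReal.ofReal γ * ∫⁻ s in Set.Ioo 0 T, H s x) ^ r := by
      intro x
      have hpb := pointwise_bound hγ2 ht0 (fun s => v s x) (fun s => vt s x)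
        (hvsec x) (hvtsec x) (fun s hs => hFTC x s ⟨hs.1, le_trans hs.2 ht.2.le⟩)
      have hsub : ∫⁻ s in Set.Ioc 0 t, (‖v s x‖₊ : ℝ≥0∞) ^ (γ-1) * (‖vt s x‖₊ : ℝ≥0∞)
          ≤ ∫⁻ s in Set.Ioo 0 T, H s x :=
        lintegral_mono_set (fun s hs => ⟨hs.1, lt_of_le_of_lt hs.2 ht.2⟩)
      calc (‖v t x‖₊ : ℝ≥0∞) ^ ts = ((‖v t x‖₊ : ℝ≥0∞) ^ γ) ^ r := by
            rw [← ENNReal.rpow_mul, hA1]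
        _ ≤ (ENNReal.ofReal γ * ∫⁻ s in Set.Ioo 0 T, H s x) ^ r := by
            refine ENNReal.rpow_le_rpow (le_trans hpb ?_) hrpos.le
            exact mul_le_mul_right hsub _
    -- integrate in x, apply Minkowski
    have hmink := minkowski_lintegral (volume : Measure (Fin N → ℝ))
      (volume.restrict (Set.Ioo 0 T)) H hHm hr1
    have hHinner : Measurable fun x => ∫⁻ s in Set.Ioo 0 T, H s x :=
      (hHm.comp measurable_swap).lintegral_prod_right'
    calc eLpNorm (v t) (ENNReal.ofReal ts) volume ^ γ
        = (∫⁻ x, (‖v t x‖₊ : ℝ≥0∞) ^ ts) ^ ((1/ts) * γ) := by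
          rw [eLpNorm_eq_lintegral_rpow_nnnorm hofts ENNReal.ofReal_ne_top,
            ENNReal.toReal_ofReal htspos.le, ENNReal.rpow_mul]
      _ = (∫⁻ x, (‖v t x‖₊ : ℝ≥0∞) ^ ts) ^ (1/r) := by rw [hA10]
      _ ≤ (∫⁻ x, (ENNReal.ofReal γ * ∫⁻ s in Set.Ioo 0 T, H s x) ^ r) ^ (1/r) := by
          refine ENNReal.rpow_le_rpow (lintegral_mono fun x => hx x) (by positivity)
      _ = ENNReal.ofReal γ * (∫⁻ x, (∫⁻ s in Set.Ioo 0 T, H s x) ^ r) ^ (1/r) := by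
          have : ∀ x, (ENNReal.ofReal γ * ∫⁻ s in Set.Ioo 0 T, H s x) ^ r
              = ENNReal.ofReal γ ^ r * (∫⁻ s in Set.Ioo 0 T, H s x) ^ r := fun x =>
            ENNReal.mul_rpow_of_nonneg _ _ hrpos.le
          rw [lintegral_congr this, lintegral_const_mul _ (hHinner.pow_const _),
            ENNReal.mul_rpow_of_nonneg _ _ (by positivity : (0:ℝ) ≤ 1/r),
            ← ENNReal.rpow_mul, mul_one_div, div_self (ne_of_gt hrpos), ENNReal.rpow_one]
      _ ≤ ENNReal.ofReal γ * ∫⁻ s in Set.Ioo 0 T, (∫⁻ x, H s x ^ r) ^ (1/r) :=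
          mul_le_mul_right hmink _
      _ ≤ ENNReal.ofReal γ * ∫⁻ s in Set.Ioo 0 T,
            ((∫⁻ x, (‖v s x‖₊ : ℝ≥0∞) ^ ρs) ^ ((1/ρs) * (γ-1))) *
            ((∫⁻ x, (‖vt s x‖₊ : ℝ≥0∞) ^ ρ) ^ (1/ρ)) := by
          refine mul_le_mul_right (lintegral_mono fun s => ?_) _
          -- Hölder in x
          have hsplit : ∀ x, H s x ^ r
              = (‖v s x‖₊ : ℝ≥0∞) ^ ((γ-1) * r) * (‖vt s x‖₊ : ℝ≥0∞) ^ r := by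
            intro x
            rw [hH_def]
            rw [ENNReal.mul_rpow_of_nonneg _ _ hrpos.le, ← ENNReal.rpow_mul]
          have hhold := ENNReal.lintegral_mul_le_Lp_mul_Lq (volume : Measure (Fin N → ℝ))
            hpq (f := fun x => (‖v s x‖₊ : ℝ≥0∞) ^ ((γ-1) * r))
            (g := fun x => (‖vt s x‖₊ : ℝ≥0∞) ^ r)
            (((hvx s).pow_const _).aemeasurable) (((hvtx s).pow_const _).aemeasurable)
          have e1 : ∫⁻ x, ((fun x => (‖v s x‖₊ : ℝ≥0∞) ^ ((γ-1) * r)) *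
              (fun x => (‖vt s x‖₊ : ℝ≥0∞) ^ r)) x = ∫⁻ x, H s x ^ r :=
            lintegral_congr fun x => (hsplit x).symm
          have e2 : ∀ x, ((‖v s x‖₊ : ℝ≥0∞) ^ ((γ-1) * r)) ^ p
              = (‖v s x‖₊ : ℝ≥0∞) ^ ρs := fun x => by
            rw [← ENNReal.rpow_mul, hA2]
          have e3 : ∀ x, ((‖vt s x‖₊ : ℝ≥0∞) ^ r) ^ q
              = (‖vt s x‖₊ : ℝ≥0∞) ^ ρ := fun x => by
            rw [← ENNReal.rpow_mul, hA3]
          rw [e1, lintegral_congr e2, lintegral_congr e3] at hhold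
          calc (∫⁻ x, H s x ^ r) ^ (1/r)
              ≤ ((∫⁻ x, (‖v s x‖₊ : ℝ≥0∞) ^ ρs) ^ (1/p) *
                  (∫⁻ x, (‖vt s x‖₊ : ℝ≥0∞) ^ ρ) ^ (1/q)) ^ (1/r) :=
                ENNReal.rpow_le_rpow hhold (by positivity)
            _ = ((∫⁻ x, (‖v s x‖₊ : ℝ≥0∞) ^ ρs) ^ ((1/ρs) * (γ-1))) *
                  ((∫⁻ x, (‖vt s x‖₊ : ℝ≥0∞) ^ ρ) ^ (1/ρ)) := by
                rw [ENNReal.mul_rpow_of_nonneg _ _ (by positivity : (0:ℝ) ≤ 1/r),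
                  ← ENNReal.rpow_mul, ← ENNReal.rpow_mul, hA5, hA6]
      _ ≤ C := by
          rw [hC_def, mul_assoc]
          refine mul_le_mul_right ?_ _
          -- Hölder in time
          set Φv : ℝ → ℝ≥0∞ := fun s => (∫⁻ x, (‖v s x‖₊ : ℝ≥0∞) ^ ρs) ^ (1/ρs) with hΦv_def
          set Φvt : ℝ → ℝ≥0∞ := fun s => (∫⁻ x, (‖vt s x‖₊ : ℝ≥0∞) ^ ρ) ^ (1/ρ) with hΦvt_def
          have hhold2 := ENNReal.lintegral_mul_le_Lp_mul_Lq (volume.restrict (Set.Ioo 0 T))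
            hγconj (f := fun s => Φv s ^ (γ - 1)) (g := Φvt)
            (((hIv.pow_const _).pow_const _).aemeasurable)
            ((hIvt.pow_const _).aemeasurable)
          have e4 : ∫⁻ s in Set.Ioo 0 T, ((fun s => Φv s ^ (γ-1)) * Φvt) s
              = ∫⁻ s in Set.Ioo 0 T,
                ((∫⁻ x, (‖v s x‖₊ : ℝ≥0∞) ^ ρs) ^ ((1/ρs) * (γ-1))) *
                ((∫⁻ x, (‖vt s x‖₊ : ℝ≥0∞) ^ ρ) ^ (1/ρ)) := by
            refine lintegral_congr fun s => ?_
            rw [Pi.mul_apply, hΦv_def, hΦvt_def, ← ENNReal.rpow_mul]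
          have e5 : ∀ s, (Φv s ^ (γ-1)) ^ (γ/(γ-1)) = Φv s ^ γ := fun s => by
            rw [← ENNReal.rpow_mul, hA7]
          rw [e4, lintegral_congr e5] at hhold2
          refine le_trans hhold2 ?_
          apply le_of_eq
          rw [hNv_def, hNvt_def]
          congr 1
          rw [hA8, ENNReal.rpow_mul]
  -- conclude via essSup
  rw [hγdefeq, hρdefeq, hρsdefeq, htsdefeq]
  simp only [mixedNorm, if_pos rfl, if_neg (ENNReal.ofReal_ne_top : ENNReal.ofReal γ ≠ ∞), hofγ]
  have hNv_eq : (∫⁻ t in Set.Ioo 0 T,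
      eLpNorm (v t) (ENNReal.ofReal ρs) volume ^ γ ∂volume) ^ (1/γ) = Nv := by
    rw [hNv_def]
    congr 1
    exact lintegral_congr fun s => by rw [hv_eLp s]
  have hNvt_eq : (∫⁻ t in Set.Ioo 0 T,
      eLpNorm (vt t) (ENNReal.ofReal ρ) volume ^ γ ∂volume) ^ (1/γ) = Nvt := by
    rw [hNvt_def]
    congr 1
    exact lintegral_congr fun s => by rw [hvt_eLp s]
  rw [hNv_eq, hNvt_eq, ← hC_def]
  have hess : essSup (fun t => eLpNorm (v t) (ENNReal.ofReal ts) volume)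
      (volume.restrict (Set.Ioo 0 T)) ≤ C ^ (1/γ) := by
    apply essSup_le_of_ae_le (hfbdd := by isBoundedDefault)
    have goal : ∀ᵐ (t : ℝ) ∂(volume.restrict (Set.Ioo 0 T)),
        eLpNorm (v t) (ENNReal.ofReal ts) volume ≤ C ^ (1/γ) := by
      rw [ae_restrict_iff' measurableSet_Ioo]
      refine ae_of_all _ fun t ht => ?_
      calc eLpNorm (v t) (ENNReal.ofReal ts) volume
          = (eLpNorm (v t) (ENNReal.ofReal ts) volume ^ γ) ^ (1/γ) := by
            rw [← ENNReal.rpow_mul, mul_one_div, div_self (ne_of_gt hγpos), ENNReal.rpow_one]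
        _ ≤ C ^ (1/γ) := ENNReal.rpow_le_rpow (central t ht) (by positivity)
    exact goal
  calc essSup (fun t => eLpNorm (v t) (ENNReal.ofReal ts) volume)
        (volume.restrict (Set.Ioo 0 T)) ^ γ
      ≤ (C ^ (1/γ)) ^ γ := ENNReal.rpow_le_rpow hess hγpos.le
    _ = C := by
        rw [← ENNReal.rpow_mul, one_div_mul_cancel (ne_of_gt hγpos), ENNReal.rpow_one]
end
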